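/- arXiv:2409.03755 — 7 statements merged into one kernel-verified Lean document; each statement's English description precedes it below -/
import Mathlib

section
/- Let V be a real normed vector space, p ≥ 2 an integer, 0 < h ≤ 1, and L, C₂, C₄, C_x, C_β ≥ 0. Let x_{i−1}, …, x_{i−(p−1)} ∈ V and x̃_{i−1}, …, x̃_{i−(p−1)} ∈ V satisfy ‖x̃_{i−k} − x_{i−k}‖ ≤ C_x·h^p for 1 ≤ k ≤ p−1. Let g_1, …, g_{p−1} ∈ V and β̂_2, …, β̂_{p−1} ∈ V satisfy ‖β̂_m − g_m‖ ≤ C_β·h^(p−1) for 2 ≤ m ≤ p−1. Let f : V → V be L-Lipschitz with f(x_{i−1}) = g_1. Let A, B_1, …, B_{p−1} ∈ ℝ be scalars with |A| ≤ C₂ and |B_m| ≤ C₄·h for 1 ≤ m ≤ p−1. Define x̃ᵖ = A·x̃_{i−1} + B_1·f(x̃_{i−1}) + Σ_{m=2}^{p−1} B_m·β̂_m and x̄ = A·x_{i−1} + Σ_{m=1}^{p−1} B_m·g_m. Then ‖x̃ᵖ − x̄‖ ≤ (C₂·C_x + (p−2)·C₄·C_β)·h^p + C₄·L·C_x·h^(p+1);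 in particular ‖x̃ᵖ − x̄‖ ≤ (C₂·C_x + (p−2)·C₄·C_β + C₄·L·C_x)·h^p. -/
/-- Comparison of the standard `p`-th order multistep predictor applied to
approximate inputs with the predictor applied to ground-truth inputs. -/
theorem predictor_discrepancy_bound {V : Type*} [NormedAddCommGroup V] [NormedSpace ℝ V]
    (p : ℕ) (hp : 2 ≤ p) (h : ℝ) (hh0 : 0 < h) (hh1 : h ≤ 1)
    (L C₂ C₄ Cx Cβ : ℝ)
    (hL : 0 ≤ L) (hC₂ : 0 ≤ C₂) (hC₄ : 0 ≤ C₄) (hCx : 0 ≤ Cx) (hCβ : 0 ≤ Cβ)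
    (x xt : ℕ → V)
    (hx : ∀ k, 1 ≤ k → k ≤ p - 1 → ‖xt k - x k‖ ≤ Cx * h ^ p)
    (g βhat : ℕ → V)
    (hβ : ∀ m, 2 ≤ m → m ≤ p - 1 → ‖βhat m - g m‖ ≤ Cβ * h ^ (p - 1))
    (f : V → V) (hf : ∀ u v : V, ‖f u - f v‖ ≤ L * ‖u - v‖)
    (hfx : f (x 1) = g 1)
    (A : ℝ) (B : ℕ → ℝ)
    (hA : |A| ≤ C₂)
    (hB : ∀ m, 1 ≤ m → m ≤ p - 1 → |B m| ≤ C₄ * h)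
    (xtp xbar : V)
    (hxtp : xtp = A • xt 1 + B 1 • f (xt 1) + ∑ m ∈ Finset.Icc 2 (p - 1), B m • βhat m)
    (hxbar : xbar = A • x 1 + ∑ m ∈ Finset.Icc 1 (p - 1), B m • g m) :
    ‖xtp - xbar‖ ≤ (C₂ * Cx + ((p : ℝ) - 2) * C₄ * Cβ) * h ^ p + C₄ * L * Cx * h ^ (p + 1) ∧
    ‖xtp - xbar‖ ≤ (C₂ * Cx + ((p : ℝ) - 2) * C₄ * Cβ + C₄ * L * Cx) * h ^ p := by
  have h1p : 1 ≤ p - 1 := by omega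
  have herase : Finset.Icc 2 (p - 1) = (Finset.Icc 1 (p - 1)).erase 1 := by
    rw [Finset.Icc_erase_left]
    exact (Finset.Icc_add_one_left_eq_Ioc 1 (p - 1)).symm
  have hsum : ∑ m ∈ Finset.Icc 1 (p - 1), B m • g m
      = B 1 • g 1 + ∑ m ∈ Finset.Icc 2 (p - 1), B m • g m := by
    rw [herase]
    exact (Finset.add_sum_erase _ (fun m => B m • g m) (by simp [h1p])).symm
  have hd : xtp - xbar = A • (xt 1 - x 1) + B 1 • (f (xt 1) - g 1)
      + ∑ m ∈ Finset.Icc 2 (p - 1), B m • (βhat m - g m) := by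
    rw [hxtp, hxbar, hsum]
    simp only [smul_sub, Finset.sum_sub_distrib]
    abel
  have hnorm : ‖xtp - xbar‖ ≤ ‖A • (xt 1 - x 1)‖ + ‖B 1 • (f (xt 1) - g 1)‖
      + ‖∑ m ∈ Finset.Icc 2 (p - 1), B m • (βhat m - g m)‖ := by
    rw [hd]; exact norm_add₃_le
  have hpow : 0 < h ^ p := pow_pos hh0 p
  have t1 : ‖A • (xt 1 - x 1)‖ ≤ C₂ * (Cx * h ^ p) := by
    rw [norm_smul, Real.norm_eq_abs]
    exact mul_le_mul hA (hx 1 le_rfl h1p) (norm_nonneg _) hC₂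
  have t2 : ‖B 1 • (f (xt 1) - g 1)‖ ≤ C₄ * L * Cx * h ^ (p + 1) := by
    rw [norm_smul, Real.norm_eq_abs, ← hfx]
    have h2 : ‖f (xt 1) - f (x 1)‖ ≤ L * (Cx * h ^ p) :=
      (hf _ _).trans (by exact mul_le_mul_of_nonneg_left (hx 1 le_rfl h1p) hL)
    calc |B 1| * ‖f (xt 1) - f (x 1)‖ ≤ (C₄ * h) * (L * (Cx * h ^ p)) :=
          mul_le_mul (hB 1 le_rfl h1p) h2 (norm_nonneg _) (by positivity)
      _ = C₄ * L * Cx * h ^ (p + 1) := by ring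
  have t3 : ‖∑ m ∈ Finset.Icc 2 (p - 1), B m • (βhat m - g m)‖
      ≤ ((p : ℝ) - 2) * C₄ * Cβ * h ^ p := by
    have hterm : ∀ m ∈ Finset.Icc 2 (p - 1), ‖B m • (βhat m - g m)‖
        ≤ C₄ * Cβ * h ^ p := by
      intro m hm
      simp only [Finset.mem_Icc] at hm
      rw [norm_smul, Real.norm_eq_abs]
      calc |B m| * ‖βhat m - g m‖ ≤ (C₄ * h) * (Cβ * h ^ (p - 1)) :=
            mul_le_mul (hB m (by omega) hm.2) (hβ m hm.1 hm.2) (norm_nonneg _) (by positivity)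
        _ = C₄ * Cβ * (h * h ^ (p - 1)) := by ring
        _ = C₄ * Cβ * h ^ p := by
            rw [← pow_succ']
            congr 2
            omega
    calc ‖∑ m ∈ Finset.Icc 2 (p - 1), B m • (βhat m - g m)‖
        ≤ ∑ m ∈ Finset.Icc 2 (p - 1), ‖B m • (βhat m - g m)‖ := norm_sum_le _ _
      _ ≤ (Finset.Icc 2 (p - 1)).card • (C₄ * Cβ * h ^ p) :=
          Finset.sum_le_card_nsmul _ _ _ hterm
      _ = (Finset.Icc 2 (p - 1)).card * (C₄ * Cβ * h ^ p) := nsmul_eq_mul _ _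
      _ = ((p : ℝ) - 2) * C₄ * Cβ * h ^ p := by
          rw [Nat.card_Icc]
          have : p - 1 + 1 - 2 = p - 2 := by omega
          rw [this]
          push_cast [Nat.cast_sub hp]
          ring
  have main : ‖xtp - xbar‖ ≤ (C₂ * Cx + ((p : ℝ) - 2) * C₄ * Cβ) * h ^ p
      + C₄ * L * Cx * h ^ (p + 1) := by
    calc ‖xtp - xbar‖ ≤ ‖A • (xt 1 - x 1)‖ + ‖B 1 • (f (xt 1) - g 1)‖
        + ‖∑ m ∈ Finset.Icc 2 (p - 1), B m • (βhat m - g m)‖ := hnorm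
      _ ≤ C₂ * (Cx * h ^ p) + C₄ * L * Cx * h ^ (p + 1)
          + ((p : ℝ) - 2) * C₄ * Cβ * h ^ p := by linarith
      _ = (C₂ * Cx + ((p : ℝ) - 2) * C₄ * Cβ) * h ^ p + C₄ * L * Cx * h ^ (p + 1) := by ring
  refine ⟨main, main.trans ?_⟩
  have hle : h ^ (p + 1) ≤ h ^ p := by
    rw [pow_succ]
    nlinarith
  nlinarith [mul_nonneg (mul_nonneg hC₄ hL) hCx]
end

section
/- Let V be a real normed vector space, p ≥ 2 an integer, 0 < h ≤ 1, and C₂, C₄, C_x, C_β, C₉ ≥ 0 and C₃ > 0. Let x_{i−1}, x̃_{i−1} ∈ V with ‖x̃_{i−1} − x_{i−1}‖ ≤ C_x·h^p; let g_1, …, g_{p−1}, β̂_1, …, β̂_{p−1} ∈ V with ‖β̂_m − g_m‖ ≤ C_β·h^(p−1) for 2 ≤ m ≤ p−1; and let A, B_1, …, B_{p−1} ∈ ℝ with |A| ≤ C₂, |B_m| ≤ C₄·h for 2 ≤ m ≤ p−1, and |B_1| ≥ C₃·h. Define x̃_i = A·x̃_{i−1} + Σ_{m=1}^{p−1} B_m·β̂_m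 and x̄ = A·x_{i−1} + Σ_{m=1}^{p−1} B_m·g_m, and assume ‖x̃_i − x̄‖ ≤ C₉·h^p. Then ‖β̂_1 − g_1‖ ≤ ((C₉ + C₂·C_x + (p−2)·C₄·C_β)/C₃)·h^(p−1). -/
/-! The error vector of the iterate is a linear combination of the input errors in which the
newest output error `β̂₁ - g₁` carries the weight `B₁`. Isolating that term, the triangle
inequality bounds `|B₁| ‖β̂₁ - g₁‖` by `O(h ^ p)`; since `|B₁| ≥ C₃ h`, dividing by `C₃ h` loses
exactly one power of `h`. -/

open Finset

theorem smul_add_sum_smul_sub_smul_add_sum_smul {R V ι : Type*} [Ring R] [AddCommGroup V]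
    [Module R V] (s : Finset ι) (a : R) (b : ι → R)
    (x x' : V) (y y' : ι → V) :
    (a • x + ∑ i ∈ s, b i • y i) - (a • x' + ∑ i ∈ s, b i • y' i)
      = a • (x - x') + ∑ i ∈ s, b i • (y i - y' i) := by
  simp only [smul_sub, sum_sub_distrib]
  abel

section

variable {V : Type*} [SeminormedAddCommGroup V] [NormedSpace ℝ V]

theorem norm_sum_smul_le_card_mul {ι : Type*} (s : Finset ι) (b : ι → ℝ) (v : ι → V)
    {β ε : ℝ} (hb : ∀ i ∈ s, |b i| ≤ β) (hv : ∀ i ∈ s, ‖v i‖ ≤ ε) :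
    ‖∑ i ∈ s, b i • v i‖ ≤ s.card * (β * ε) := by
  have hterm : ∀ i ∈ s, ‖b i • v i‖ ≤ β * ε := fun i hi => by
    rw [norm_smul, Real.norm_eq_abs]
    exact mul_le_mul (hb i hi) (hv i hi) (norm_nonneg _) ((abs_nonneg _).trans (hb i hi))
  simpa only [sum_const, nsmul_eq_mul] using norm_sum_le_of_le s hterm

theorem abs_mul_norm_le_of_eq_smul_add_smul_add {a b : ℝ} {x y z e : V}
    (he : e = a • x + b • y + z) : |b| * ‖y‖ ≤ ‖e‖ + |a| * ‖x‖ + ‖z‖ := by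
  have hy : b • y = e - a • x - z := by rw [he]; abel
  calc |b| * ‖y‖ = ‖e - a • x - z‖ := by rw [← hy, norm_smul, Real.norm_eq_abs]
    _ ≤ ‖e‖ + ‖a • x‖ + ‖z‖ := norm_sub_le_of_le (norm_sub_le _ _) le_rfl
    _ = ‖e‖ + |a| * ‖x‖ + ‖z‖ := by rw [norm_smul, Real.norm_eq_abs]

end

theorem le_div_mul_pow_pred_of_mul_le {c h y K : ℝ} {p : ℕ} (hc : 0 < c) (hh : 0 < h)
    (hp : 1 ≤ p) (H : c * h * y ≤ K * h ^ p) : y ≤ K / c * h ^ (p - 1) := by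
  rw [← mul_le_mul_iff_right₀ (mul_pos hc hh)]
  calc c * h * y ≤ K * h ^ p := H
    _ = c * h * (K / c * h ^ (p - 1)) := by
      rw [← Nat.sub_add_cancel hp, pow_succ, Nat.add_sub_cancel]
      field_simp

theorem compensated_output_error_bound_general {V : Type*} [NormedAddCommGroup V] [NormedSpace ℝ V]
    (p : ℕ) (hp : 2 ≤ p) (h : ℝ) (hh0 : 0 < h)
    (C₂ C₄ Cx Cβ C₉ C₃ : ℝ)
    (hC₃ : 0 < C₃)
    (x1 xt1 : V) (hx : ‖xt1 - x1‖ ≤ Cx * h ^ p)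
    (g βhat : ℕ → V)
    (hβ : ∀ m, 2 ≤ m → m ≤ p - 1 → ‖βhat m - g m‖ ≤ Cβ * h ^ (p - 1))
    (A : ℝ) (B : ℕ → ℝ)
    (hA : |A| ≤ C₂)
    (hB : ∀ m, 2 ≤ m → m ≤ p - 1 → |B m| ≤ C₄ * h)
    (hB1 : C₃ * h ≤ |B 1|)
    (xti xbar : V)
    (hxti : xti = A • xt1 + ∑ m ∈ Finset.Icc 1 (p - 1), B m • βhat m)
    (hxbar : xbar = A • x1 + ∑ m ∈ Finset.Icc 1 (p - 1), B m • g m)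
    (hclose : ‖xti - xbar‖ ≤ C₉ * h ^ p) :
    ‖βhat 1 - g 1‖ ≤ ((C₉ + C₂ * Cx + ((p : ℝ) - 2) * C₄ * Cβ) / C₃) * h ^ (p - 1) := by
  have hsplit : xti - xbar = A • (xt1 - x1) + B 1 • (βhat 1 - g 1)
      + ∑ m ∈ Icc 2 (p - 1), B m • (βhat m - g m) := by
    rw [hxti, hxbar, smul_add_sum_smul_sub_smul_add_sum_smul,
      ← add_sum_Ioc_eq_sum_Icc (by omega : 1 ≤ p - 1), ← Icc_add_one_left_eq_Ioc, add_assoc]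
    rfl
  have htail := norm_sum_smul_le_card_mul (Icc 2 (p - 1)) B (fun m => βhat m - g m)
    (fun m hm => hB m (mem_Icc.1 hm).1 (mem_Icc.1 hm).2)
    (fun m hm => hβ m (mem_Icc.1 hm).1 (mem_Icc.1 hm).2)
  have hcard : ((Icc 2 (p - 1)).card : ℝ) = p - 2 := by
    rw [Nat.card_Icc, show p - 1 + 1 - 2 = p - 2 by omega, Nat.cast_sub hp, Nat.cast_ofNat]
  have hpow : h ^ p = h * h ^ (p - 1) := by rw [← pow_succ', Nat.sub_add_cancel (by omega)]
  apply le_div_mul_pow_pred_of_mul_le hC₃ hh0 (by omega)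
  calc C₃ * h * ‖βhat 1 - g 1‖ ≤ |B 1| * ‖βhat 1 - g 1‖ := by gcongr
    _ ≤ ‖xti - xbar‖ + |A| * ‖xt1 - x1‖ + ‖∑ m ∈ Icc 2 (p - 1), B m • (βhat m - g m)‖ :=
      abs_mul_norm_le_of_eq_smul_add_smul_add hsplit
    _ ≤ C₉ * h ^ p + C₂ * (Cx * h ^ p) + ((p : ℝ) - 2) * (C₄ * h * (Cβ * h ^ (p - 1))) := by
      rw [← hcard]
      gcongr
      exact (abs_nonneg A).trans hA
    _ = (C₉ + C₂ * Cx + ((p : ℝ) - 2) * C₄ * Cβ) * h ^ p := by rw [hpow]; ring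

/-- Extracting a bound on the error of the newest compensated output `β̂₁` from a
bound on the discrepancy of the resulting multistep-predictor iterates. -/
theorem compensated_output_error_bound {V : Type*} [NormedAddCommGroup V] [NormedSpace ℝ V]
    (p : ℕ) (hp : 2 ≤ p) (h : ℝ) (hh0 : 0 < h) (hh1 : h ≤ 1)
    (C₂ C₄ Cx Cβ C₉ C₃ : ℝ)
    (hC₂ : 0 ≤ C₂) (hC₄ : 0 ≤ C₄) (hCx : 0 ≤ Cx) (hCβ : 0 ≤ Cβ) (hC₉ : 0 ≤ C₉)
    (hC₃ : 0 < C₃)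
    (x1 xt1 : V) (hx : ‖xt1 - x1‖ ≤ Cx * h ^ p)
    (g βhat : ℕ → V)
    (hβ : ∀ m, 2 ≤ m → m ≤ p - 1 → ‖βhat m - g m‖ ≤ Cβ * h ^ (p - 1))
    (A : ℝ) (B : ℕ → ℝ)
    (hA : |A| ≤ C₂)
    (hB : ∀ m, 2 ≤ m → m ≤ p - 1 → |B m| ≤ C₄ * h)
    (hB1 : C₃ * h ≤ |B 1|)
    (xti xbar : V)
    (hxti : xti = A • xt1 + ∑ m ∈ Finset.Icc 1 (p - 1), B m • βhat m)
    (hxbar : xbar = A • x1 + ∑ m ∈ Finset.Icc 1 (p - 1), B m • g m)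
    (hclose : ‖xti - xbar‖ ≤ C₉ * h ^ p) :
    ‖βhat 1 - g 1‖ ≤ ((C₉ + C₂ * Cx + ((p : ℝ) - 2) * C₄ * Cβ) / C₃) * h ^ (p - 1) :=
  compensated_output_error_bound_general p hp h hh0 C₂ C₄ Cx Cβ C₉ C₃ hC₃ x1 xt1 hx g βhat hβ A B hA
    hB hB1 xti xbar hxti hxbar hclose
end

section
/- (Global convergence of the predictor-only DC-Solver, Theorem: applying dynamic compensation to a predictor-only sampler of p-th order of convergence maintains the p-th order of convergence.) Let V be a real normed vector space; fix integers p ≥ 2, K ≥ p−1, M > K and constants L, C₂, C₄, C_gt, C_w ≥ 0 and C₃ > 0. Then there exist constants Γ, Γ′ ≥ 0, depending only on p, K, M, L, C₂, C₃, C₄, C_gt, C_w (and not on h), such that the following holds for every h with 0 < h ≤ 1: for every family of L-Lipschitz maps f_k : V → V (0 ≤ k ≤ M−1), every scalars A_i, B_{i,1}, …, B_{i,p−1} (K < i ≤ M) with |A_i| ≤ C₂ and C₃·h ≤ |B_{i,m}| ≤ C₄·h, every ground-truth points x_0, …, x_M ∈ V satisfying ‖A_i·x_{i−1} + Σ_{m=1}^{p−1}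 B_{i,m}·f_{i−m}(x_{i−m}) − x_i‖ ≤ C_gt·h^(p+1) for all K < i ≤ M, and every sequences x̃_0, …, x̃_M ∈ V and β̂_0, …, β̂_{M−1} ∈ V such that (a) ‖x̃_k − x_k‖ ≤ C_w·h^p for 0 ≤ k ≤ K, (b) β̂_k = f_k(x̃_k) for 0 ≤ k < K, and (c) for each K < i ≤ M, x̃_i = A_i·x̃_{i−1} + Σ_{m=1}^{p−1} B_{i,m}·β̂_{i−m} and ‖x̃_i − x_i‖ ≤ ‖A_i·x̃_{i−1} + B_{i,1}·f_{i−1}(x̃_{i−1}) + Σ_{m=2}^{p−1} B_{i,m}·β̂_{i−m} − x_i‖, one has ‖x̃_M − x_M‖ ≤ Γ·h^p and ‖β̂_{M−1} − f_{M−1}(x_{M−1})‖ ≤ Γ′·h^(p−1). -/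
private lemma dc_sum_split {V : Type*} [AddCommMonoid V] (g : ℕ → V) {q : ℕ} (hq : 1 ≤ q) :
    ∑ m ∈ Finset.Icc 1 q, g m = g 1 + ∑ m ∈ Finset.Icc 2 q, g m := by
  have h1 : Finset.Icc 1 q = insert 1 (Finset.Icc 2 q) := by
    ext a; simp only [Finset.mem_Icc, Finset.mem_insert]; omega
  rw [h1, Finset.sum_insert (by simp)]

private def dcA (D c0 : ℝ) : ℕ → ℝ
  | 0 => c0
  | j+1 => D * (dcA D c0 j + 1)

private lemma dcA_nonneg {D c0 : ℝ} (hD : 0 ≤ D) (hc : 0 ≤ c0) (j : ℕ) : 0 ≤ dcA D c0 j := by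
  induction j with
  | zero => exact hc
  | succ j ih => exact mul_nonneg hD (by linarith)

private lemma dcA_mono {D c0 : ℝ} (hD : 1 ≤ D) (hc : 0 ≤ c0) (j : ℕ) :
    dcA D c0 j ≤ dcA D c0 (j+1) := by
  have h0 := dcA_nonneg (D := D) (by linarith) hc j
  show dcA D c0 j ≤ D * (dcA D c0 j + 1)
  nlinarith

set_option maxHeartbeats 2000000 in
/-- Global convergence of the predictor-only DC-Solver: applying dynamic
compensation to a predictor-only sampler of `p`-th order of convergence
maintains the `p`-th order of convergence. -/
theorem dc_predictor_global_convergence {V : Type*} [NormedAddCommGroup V] [NormedSpace ℝ V]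
    (p K M : ℕ) (hp : 2 ≤ p) (hK : p - 1 ≤ K) (hM : K < M)
    (L C₂ C₄ Cgt Cw C₃ : ℝ)
    (hL : 0 ≤ L) (hC₂ : 0 ≤ C₂) (hC₄ : 0 ≤ C₄) (hCgt : 0 ≤ Cgt) (hCw : 0 ≤ Cw)
    (hC₃ : 0 < C₃) :
    ∃ Γ Γ' : ℝ, 0 ≤ Γ ∧ 0 ≤ Γ' ∧
      ∀ (h : ℝ), 0 < h → h ≤ 1 →
      ∀ (f : ℕ → V → V),
        (∀ k, k ≤ M - 1 → ∀ u v : V, ‖f k u - f k v‖ ≤ L * ‖u - v‖) →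
      ∀ (A : ℕ → ℝ) (B : ℕ → ℕ → ℝ),
        (∀ i, K < i → i ≤ M → |A i| ≤ C₂) →
        (∀ i, K < i → i ≤ M → ∀ m, 1 ≤ m → m ≤ p - 1 →
          C₃ * h ≤ |B i m| ∧ |B i m| ≤ C₄ * h) →
      ∀ (x : ℕ → V),
        (∀ i, K < i → i ≤ M →
          ‖A i • x (i - 1) + (∑ m ∈ Finset.Icc 1 (p - 1), B i m • f (i - m) (x (i - m))) - x i‖
            ≤ Cgt * h ^ (p + 1)) →
      ∀ (xt βhat : ℕ → V),
        -- (a) warm-up accuracy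
        (∀ k, k ≤ K → ‖xt k - x k‖ ≤ Cw * h ^ p) →
        -- (b) warm-up outputs without compensation
        (∀ k, k < K → βhat k = f k (xt k)) →
        -- (c) DC-Solver updates with the optimality relation
        (∀ i, K < i → i ≤ M →
          xt i = A i • xt (i - 1) + ∑ m ∈ Finset.Icc 1 (p - 1), B i m • βhat (i - m)) →
        (∀ i, K < i → i ≤ M →
          ‖xt i - x i‖ ≤
            ‖A i • xt (i - 1) + B i 1 • f (i - 1) (xt (i - 1))
              + (∑ m ∈ Finset.Icc 2 (p - 1), B i m • βhat (i - m)) - x i‖) →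
      ‖xt M - x M‖ ≤ Γ * h ^ p ∧
      ‖βhat (M - 1) - f (M - 1) (x (M - 1))‖ ≤ Γ' * h ^ (p - 1) := by
  set E : ℝ := C₂ + C₄ * (L + p) with hE_def
  have hE0 : 0 ≤ E := by positivity
  set Q : ℝ := E + C₂ + C₄ * p + 2 * Cgt with hQ_def
  have hQ0 : 0 ≤ Q := by positivity
  set D : ℝ := 1 + E + Cgt + Q / C₃ with hD_def
  have hD1 : 1 ≤ D := by
    have : 0 ≤ Q / C₃ := div_nonneg hQ0 hC₃.le
    simp only [hD_def]; linarith
  have hD0 : 0 ≤ D := by linarith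
  have hQD : Q ≤ C₃ * D := by
    have h1 : Q / C₃ ≤ D := by
      have : 0 ≤ 1 + E + Cgt := by linarith
      simp only [hD_def]; linarith
    calc Q = C₃ * (Q / C₃) := by field_simp
    _ ≤ C₃ * D := by exact mul_le_mul_of_nonneg_left h1 hC₃.le
  set c0 : ℝ := Cw * (1 + L) with hc0_def
  have hc00 : 0 ≤ c0 := by positivity
  clear_value E Q D c0
  refine ⟨dcA D c0 (M - K), dcA D c0 (M - K), dcA_nonneg hD0 hc00 _, dcA_nonneg hD0 hc00 _, ?_⟩
  intro h hh0 hh1 f hf A B hA hB x hx xt βhat hwarm hwarmβ hupd hopt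
  have hpow0 : (0:ℝ) ≤ h ^ p := by positivity
  have hpow1 : (0:ℝ) ≤ h ^ (p - 1) := by positivity
  have hhp : h * h ^ (p - 1) = h ^ p := by
    conv_rhs => rw [show p = (p - 1) + 1 by omega]
    rw [pow_succ]; ring
  have hhp1 : h ^ (p + 1) = h ^ p * h := pow_succ h p
  have key : ∀ j : ℕ,
      (∀ i, i ≤ M → i ≤ K + j → ‖xt i - x i‖ ≤ dcA D c0 j * h ^ p) ∧
      (∀ i, i < M → i < K + j → ‖βhat i - f i (x i)‖ ≤ dcA D c0 j * h ^ (p - 1)) := by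
    intro j
    induction j with
    | zero =>
      constructor
      · intro i hiM hij
        have := hwarm i (by omega)
        have hc : Cw * h ^ p ≤ c0 * h ^ p := by
          apply mul_le_mul_of_nonneg_right _ hpow0
          nlinarith
        exact le_trans this hc
      · intro i hiM hij
        rw [hwarmβ i (by omega)]
        have hlip := hf i (by omega) (xt i) (x i)
        have hw := hwarm i (by omega)
        have : ‖f i (xt i) - f i (x i)‖ ≤ L * (Cw * h ^ p) := by
          refine le_trans hlip ?_
          exact mul_le_mul_of_nonneg_left hw hL
        refine le_trans this ?_
        show L * (Cw * h ^ p) ≤ c0 * h ^ (p - 1)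
        have : h ^ p ≤ h ^ (p - 1) := by
          rw [← hhp]; nlinarith
        nlinarith [mul_nonneg hL hCw]
    | succ j ih =>
      obtain ⟨ihE, ihG⟩ := ih
      have ha0 := dcA_nonneg hD0 hc00 j
      have hmono := dcA_mono hD1 hc00 j
      set a : ℝ := dcA D c0 j with ha_def
      have ha' : dcA D c0 (j+1) = D * (a + 1) := rfl
      clear_value a
      by_cases hn : K + j + 1 ≤ M
      · set n := K + j + 1 with hn_def
        have hKn : K < n := by omega
        have hq : 1 ≤ p - 1 := by omega
        -- bound on the compensated-tail sum
        have hS : ‖∑ m ∈ Finset.Icc 2 (p-1), B n m • (βhat (n-m) - f (n-m) (x (n-m)))‖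
            ≤ (p : ℝ) * (C₄ * (a * h ^ p)) := by
          have hterm : ∀ m ∈ Finset.Icc 2 (p-1),
              ‖B n m • (βhat (n-m) - f (n-m) (x (n-m)))‖ ≤ C₄ * (a * h ^ p) := by
            intro m hm
            rw [Finset.mem_Icc] at hm
            have hBm := (hB n hKn hn m (by omega) hm.2).2
            have hγ := ihG (n - m) (by omega) (by omega)
            rw [norm_smul, Real.norm_eq_abs]
            calc |B n m| * ‖βhat (n-m) - f (n-m) (x (n-m))‖
                ≤ (C₄ * h) * (a * h ^ (p-1)) := by
                  apply mul_le_mul hBm hγ (norm_nonneg _) (by positivity)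
              _ = C₄ * (a * (h * h ^ (p-1))) := by ring
              _ = C₄ * (a * h ^ p) := by rw [hhp]
          calc ‖∑ m ∈ Finset.Icc 2 (p-1), B n m • (βhat (n-m) - f (n-m) (x (n-m)))‖
              ≤ ∑ m ∈ Finset.Icc 2 (p-1), ‖B n m • (βhat (n-m) - f (n-m) (x (n-m)))‖ :=
                norm_sum_le _ _
            _ ≤ ∑ _m ∈ Finset.Icc 2 (p-1), C₄ * (a * h ^ p) := Finset.sum_le_sum hterm
            _ = ((p-1) + 1 - 2 : ℕ) * (C₄ * (a * h ^ p)) := by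
                rw [Finset.sum_const, Nat.card_Icc, nsmul_eq_mul]
            _ ≤ (p : ℝ) * (C₄ * (a * h ^ p)) := by
                apply mul_le_mul_of_nonneg_right _ (by positivity)
                have hcast : (((p-1) + 1 - 2 : ℕ) : ℝ) ≤ ((p : ℕ) : ℝ) :=
                  Nat.cast_le.mpr (by omega)
                exact_mod_cast hcast
        have hεn := hx n hKn hn
        have hxt1 : ‖xt (n-1) - x (n-1)‖ ≤ a * h ^ p := ihE (n-1) (by omega) (by omega)
        -- one-step error estimate
        have hen : ‖xt n - x n‖ ≤ (E * a + Cgt) * h ^ p := by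
          have hid : A n • xt (n-1) + B n 1 • f (n-1) (xt (n-1))
              + (∑ m ∈ Finset.Icc 2 (p-1), B n m • βhat (n-m)) - x n
              = A n • (xt (n-1) - x (n-1))
                + B n 1 • (f (n-1) (xt (n-1)) - f (n-1) (x (n-1)))
                + (∑ m ∈ Finset.Icc 2 (p-1), B n m • (βhat (n-m) - f (n-m) (x (n-m))))
                + (A n • x (n-1) + (∑ m ∈ Finset.Icc 1 (p-1), B n m • f (n-m) (x (n-m))) - x n) := by
            rw [dc_sum_split (fun m => B n m • f (n-m) (x (n-m))) hq]
            simp only [smul_sub, Finset.sum_sub_distrib]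
            abel
          have b1 : ‖A n • (xt (n-1) - x (n-1))‖ ≤ C₂ * (a * h ^ p) := by
            rw [norm_smul, Real.norm_eq_abs]
            exact mul_le_mul (hA n hKn hn) hxt1 (norm_nonneg _) hC₂
          have b2 : ‖B n 1 • (f (n-1) (xt (n-1)) - f (n-1) (x (n-1)))‖
              ≤ (C₄ * h) * (L * (a * h ^ p)) := by
            rw [norm_smul, Real.norm_eq_abs]
            have hBm := (hB n hKn hn 1 le_rfl hq).2
            have hlip := hf (n-1) (by omega) (xt (n-1)) (x (n-1))
            exact mul_le_mul hBm (le_trans hlip (mul_le_mul_of_nonneg_left hxt1 hL))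
              (norm_nonneg _) (by positivity)
          calc ‖xt n - x n‖ ≤ ‖A n • xt (n-1) + B n 1 • f (n-1) (xt (n-1))
              + (∑ m ∈ Finset.Icc 2 (p-1), B n m • βhat (n-m)) - x n‖ := hopt n hKn hn
            _ = ‖A n • (xt (n-1) - x (n-1))
                + B n 1 • (f (n-1) (xt (n-1)) - f (n-1) (x (n-1)))
                + (∑ m ∈ Finset.Icc 2 (p-1), B n m • (βhat (n-m) - f (n-m) (x (n-m))))
                + (A n • x (n-1) + (∑ m ∈ Finset.Icc 1 (p-1), B n m • f (n-m) (x (n-m))) - x n)‖ := by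
                rw [hid]
            _ ≤ C₂ * (a * h ^ p) + (C₄ * h) * (L * (a * h ^ p))
                + (p : ℝ) * (C₄ * (a * h ^ p)) + Cgt * h ^ (p+1) := by
                refine le_trans (le_trans (norm_add_le _ _) (add_le_add norm_add₃_le le_rfl)) ?_
                exact add_le_add (add_le_add (add_le_add b1 b2) hS) hεn
            _ ≤ (E * a + Cgt) * h ^ p := by
                rw [hhp1, hE_def]
                nlinarith [mul_nonneg (mul_nonneg hC₄ hL) (mul_nonneg ha0 hpow0),
                  mul_nonneg hCgt hpow0]
        constructor
        · intro i hiM hij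
          rcases Nat.lt_or_ge i n with hi | hi
          · refine le_trans (ihE i hiM (by omega)) ?_
            exact mul_le_mul_of_nonneg_right hmono hpow0
          · have hieq : i = n := by omega
            rw [hieq]
            refine le_trans hen ?_
            apply mul_le_mul_of_nonneg_right _ hpow0
            rw [ha']
            have hdiv : 0 ≤ Q / C₃ := div_nonneg hQ0 hC₃.le
            have hED : E ≤ D := by rw [hD_def]; linarith
            have hCgtD : Cgt ≤ D := by rw [hD_def]; linarith
            nlinarith [mul_le_mul_of_nonneg_right hED ha0]
        · intro i hiM hij
          rcases Nat.lt_or_ge i (K + j) with hi | hi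
          · refine le_trans (ihG i hiM (by omega)) ?_
            exact mul_le_mul_of_nonneg_right hmono hpow1
          · have hieq : i = n - 1 := by omega
            rw [hieq]
            have hidγ : B n 1 • (βhat (n-1) - f (n-1) (x (n-1)))
                = (xt n - x n) - A n • (xt (n-1) - x (n-1))
                  - (∑ m ∈ Finset.Icc 2 (p-1), B n m • (βhat (n-m) - f (n-m) (x (n-m))))
                  - (A n • x (n-1) + (∑ m ∈ Finset.Icc 1 (p-1), B n m • f (n-m) (x (n-m))) - x n) := by
              rw [hupd n hKn hn, dc_sum_split (fun m => B n m • βhat (n-m)) hq,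
                  dc_sum_split (fun m => B n m • f (n-m) (x (n-m))) hq]
              simp only [smul_sub, Finset.sum_sub_distrib]
              abel
            have b1 : ‖A n • (xt (n-1) - x (n-1))‖ ≤ C₂ * (a * h ^ p) := by
              rw [norm_smul, Real.norm_eq_abs]
              exact mul_le_mul (hA n hKn hn) hxt1 (norm_nonneg _) hC₂
            have hRHS : ‖B n 1 • (βhat (n-1) - f (n-1) (x (n-1)))‖ ≤ Q * (a + 1) * h ^ p := by
              rw [hidγ]
              calc ‖(xt n - x n) - A n • (xt (n-1) - x (n-1))
                  - (∑ m ∈ Finset.Icc 2 (p-1), B n m • (βhat (n-m) - f (n-m) (x (n-m))))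
                  - (A n • x (n-1) + (∑ m ∈ Finset.Icc 1 (p-1), B n m • f (n-m) (x (n-m))) - x n)‖
                  ≤ ‖(xt n - x n) - A n • (xt (n-1) - x (n-1))
                    - (∑ m ∈ Finset.Icc 2 (p-1), B n m • (βhat (n-m) - f (n-m) (x (n-m))))‖
                    + ‖A n • x (n-1) + (∑ m ∈ Finset.Icc 1 (p-1), B n m • f (n-m) (x (n-m))) - x n‖ :=
                    norm_sub_le _ _
                _ ≤ (‖(xt n - x n) - A n • (xt (n-1) - x (n-1))‖
                    + ‖∑ m ∈ Finset.Icc 2 (p-1), B n m • (βhat (n-m) - f (n-m) (x (n-m)))‖)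
                    + Cgt * h ^ (p+1) := add_le_add (norm_sub_le _ _) hεn
                _ ≤ ((‖xt n - x n‖ + ‖A n • (xt (n-1) - x (n-1))‖)
                    + (p : ℝ) * (C₄ * (a * h ^ p))) + Cgt * h ^ (p+1) :=
                    add_le_add (add_le_add (norm_sub_le _ _) hS) le_rfl
                _ ≤ (((E * a + Cgt) * h ^ p + C₂ * (a * h ^ p))
                    + (p : ℝ) * (C₄ * (a * h ^ p))) + Cgt * h ^ (p+1) :=
                    add_le_add (add_le_add (add_le_add hen b1) le_rfl) le_rfl
                _ ≤ Q * (a + 1) * h ^ p := by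
                    rw [hhp1, hQ_def]
                    nlinarith [mul_nonneg hCgt hpow0, mul_nonneg hE0 hpow0,
                      mul_nonneg hC₂ hpow0, mul_nonneg (mul_nonneg hC₄ (Nat.cast_nonneg p : (0:ℝ) ≤ p)) hpow0]
            have hlow : C₃ * h * ‖βhat (n-1) - f (n-1) (x (n-1))‖
                ≤ ‖B n 1 • (βhat (n-1) - f (n-1) (x (n-1)))‖ := by
              rw [norm_smul, Real.norm_eq_abs]
              exact mul_le_mul_of_nonneg_right (hB n hKn hn 1 le_rfl hq).1 (norm_nonneg _)
            have hfinal : C₃ * h * ‖βhat (n-1) - f (n-1) (x (n-1))‖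
                ≤ C₃ * h * (dcA D c0 (j+1) * h ^ (p-1)) := by
              refine le_trans hlow (le_trans hRHS ?_)
              have : C₃ * h * (dcA D c0 (j+1) * h ^ (p-1))
                  = C₃ * dcA D c0 (j+1) * (h * h ^ (p-1)) := by ring
              rw [this, hhp, ha']
              have hQa : Q * (a + 1) ≤ C₃ * (D * (a + 1)) := by
                have := mul_le_mul_of_nonneg_right hQD (by linarith : (0:ℝ) ≤ a + 1)
                linarith [this]
              nlinarith [hQa]
            exact le_of_mul_le_mul_left hfinal (by positivity)
      · constructor
        · intro i hiM hij
          refine le_trans (ihE i hiM (by omega)) ?_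
          exact mul_le_mul_of_nonneg_right hmono hpow0
        · intro i hiM hij
          refine le_trans (ihG i hiM (by omega)) ?_
          exact mul_le_mul_of_nonneg_right hmono hpow1
  obtain ⟨hEc, hGc⟩ := key (M - K)
  exact ⟨hEc M le_rfl (by omega), hGc (M-1) (by omega) (by omega)⟩
end

section
/- Let V be a real normed vector space, p ≥ 2 an integer, 0 < h ≤ 1, and L, C₂, C₄, C_x, C_y, C_β ≥ 0. Let x_{i−1}, …, x_{i−(p−1)} ∈ V (ground truth), corrected approximations x̃ᶜ_{i−1} ∈ V with ‖x̃ᶜ_{i−1} − x_{i−1}‖ ≤ C_x·h^(p+1), and predicted approximations x̃_{i−1} ∈ V with ‖x̃_{i−1} − x_{i−1}‖ ≤ C_y·h^p. Let g_1, …, g_{p−1} ∈ V and β̂_2, …, β̂_{p−1} ∈ V with ‖β̂_m − g_m‖ ≤ C_β·h^p for 2 ≤ m ≤ p−1, let f : V → V be L-Lipschitz with f(x_{i−1}) = g_1, and let A, B_1, …, B_{p−1} ∈ ℝ with |A| ≤ C₂ and |B_m| ≤ C₄·h. Define x̄ = A·x̃ᶜ_{i−1} + B_1·f(x̃_{i−1})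 + Σ_{m=2}^{p−1} B_m·β̂_m and x̂ = A·x_{i−1} + Σ_{m=1}^{p−1} B_m·g_m. Then ‖x̄ − x̂‖ ≤ (C₂·C_x + (p−2)·C₄·C_β + C₄·L·C_y)·h^(p+1), and consequently, for every L-Lipschitz map f_i : V → V, ‖f_i(x̄) − f_i(x̂)‖ ≤ L·(C₂·C_x + (p−2)·C₄·C_β + C₄·L·C_y)·h^(p+1). -/
/-- Discrepancy bound between the predictor step of a predictor–corrector
sampler computed from approximate inputs and from ground-truth inputs, together
with the induced bound after applying a Lipschitz model map. -/
theorem pc_predictor_discrepancy_bound {V : Type*} [NormedAddCommGroup V] [NormedSpace ℝ V]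
    (p : ℕ) (hp : 2 ≤ p) (h : ℝ) (hh0 : 0 < h) (hh1 : h ≤ 1)
    (L C₂ C₄ Cx Cy Cβ : ℝ)
    (hL : 0 ≤ L) (hC₂ : 0 ≤ C₂) (hC₄ : 0 ≤ C₄) (hCx : 0 ≤ Cx) (hCy : 0 ≤ Cy) (hCβ : 0 ≤ Cβ)
    (x : ℕ → V) (xc1 xt1 : V)
    (hxc : ‖xc1 - x 1‖ ≤ Cx * h ^ (p + 1))
    (hxt : ‖xt1 - x 1‖ ≤ Cy * h ^ p)
    (g βhat : ℕ → V)
    (hβ : ∀ m, 2 ≤ m → m ≤ p - 1 → ‖βhat m - g m‖ ≤ Cβ * h ^ p)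
    (f : V → V) (hf : ∀ u v : V, ‖f u - f v‖ ≤ L * ‖u - v‖)
    (hfx : f (x 1) = g 1)
    (A : ℝ) (B : ℕ → ℝ)
    (hA : |A| ≤ C₂)
    (hB : ∀ m, 1 ≤ m → m ≤ p - 1 → |B m| ≤ C₄ * h)
    (xbar xhat : V)
    (hxbar : xbar = A • xc1 + B 1 • f xt1 + ∑ m ∈ Finset.Icc 2 (p - 1), B m • βhat m)
    (hxhat : xhat = A • x 1 + ∑ m ∈ Finset.Icc 1 (p - 1), B m • g m) :
    ‖xbar - xhat‖ ≤ (C₂ * Cx + ((p : ℝ) - 2) * C₄ * Cβ + C₄ * L * Cy) * h ^ (p + 1) ∧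
    ∀ fi : V → V, (∀ u v : V, ‖fi u - fi v‖ ≤ L * ‖u - v‖) →
      ‖fi xbar - fi xhat‖ ≤
        L * (C₂ * Cx + ((p : ℝ) - 2) * C₄ * Cβ + C₄ * L * Cy) * h ^ (p + 1) := by
  have hins : Finset.Icc 1 (p - 1) = insert 1 (Finset.Icc 2 (p - 1)) := by
    ext m; simp only [Finset.mem_Icc, Finset.mem_insert]; omega
  have hnot : 1 ∉ Finset.Icc 2 (p - 1) := by simp
  have hkey : xbar - xhat =
      A • (xc1 - x 1) + B 1 • (f xt1 - f (x 1)) +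
        ∑ m ∈ Finset.Icc 2 (p - 1), B m • (βhat m - g m) := by
    rw [hxbar, hxhat, hins, Finset.sum_insert hnot, hfx]
    simp only [smul_sub, Finset.sum_sub_distrib]
    abel
  have hh : 0 ≤ h := le_of_lt hh0
  have hB1 : |B 1| ≤ C₄ * h := hB 1 le_rfl (by omega)
  have h1 : ‖A • (xc1 - x 1)‖ ≤ C₂ * Cx * h ^ (p + 1) := by
    rw [norm_smul, Real.norm_eq_abs]
    calc |A| * ‖xc1 - x 1‖ ≤ C₂ * (Cx * h ^ (p + 1)) :=
          mul_le_mul hA hxc (norm_nonneg _) hC₂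
      _ = C₂ * Cx * h ^ (p + 1) := by ring
  have h2 : ‖B 1 • (f xt1 - f (x 1))‖ ≤ C₄ * L * Cy * h ^ (p + 1) := by
    rw [norm_smul, Real.norm_eq_abs]
    have := hf xt1 (x 1)
    calc |B 1| * ‖f xt1 - f (x 1)‖ ≤ (C₄ * h) * (L * (Cy * h ^ p)) := by
          apply mul_le_mul hB1 _ (norm_nonneg _) (by positivity)
          exact this.trans (mul_le_mul_of_nonneg_left hxt hL)
      _ = C₄ * L * Cy * h ^ (p + 1) := by ring
  have h3 : ‖∑ m ∈ Finset.Icc 2 (p - 1), B m • (βhat m - g m)‖ ≤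
      ((p : ℝ) - 2) * C₄ * Cβ * h ^ (p + 1) := by
    calc ‖∑ m ∈ Finset.Icc 2 (p - 1), B m • (βhat m - g m)‖
        ≤ ∑ m ∈ Finset.Icc 2 (p - 1), ‖B m • (βhat m - g m)‖ := norm_sum_le _ _
      _ ≤ ∑ m ∈ Finset.Icc 2 (p - 1), (C₄ * h) * (Cβ * h ^ p) := by
          apply Finset.sum_le_sum
          intro m hm
          rw [Finset.mem_Icc] at hm
          rw [norm_smul, Real.norm_eq_abs]
          exact mul_le_mul (hB m (by omega) hm.2) (hβ m hm.1 hm.2) (norm_nonneg _)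
            (by positivity)
      _ = ((p - 1 + 1 - 2 : ℕ) : ℝ) * ((C₄ * h) * (Cβ * h ^ p)) := by
          rw [Finset.sum_const, Nat.card_Icc, nsmul_eq_mul]
      _ ≤ ((p : ℝ) - 2) * C₄ * Cβ * h ^ (p + 1) := by
          have : ((p - 1 + 1 - 2 : ℕ) : ℝ) = (p : ℝ) - 2 := by
            have : (p - 1 + 1 - 2 : ℕ) = p - 2 := by omega
            rw [this, Nat.cast_sub hp]; norm_num
          rw [this]; ring_nf; rfl
  have hmain : ‖xbar - xhat‖ ≤
      (C₂ * Cx + ((p : ℝ) - 2) * C₄ * Cβ + C₄ * L * Cy) * h ^ (p + 1) := by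
    rw [hkey]
    calc ‖_ + _ + _‖ ≤ ‖A • (xc1 - x 1)‖ + ‖B 1 • (f xt1 - f (x 1))‖ +
          ‖∑ m ∈ Finset.Icc 2 (p - 1), B m • (βhat m - g m)‖ := norm_add₃_le
      _ ≤ C₂ * Cx * h ^ (p + 1) + ((p : ℝ) - 2) * C₄ * Cβ * h ^ (p + 1) +
          C₄ * L * Cy * h ^ (p + 1) := by linarith
      _ = (C₂ * Cx + ((p : ℝ) - 2) * C₄ * Cβ + C₄ * L * Cy) * h ^ (p + 1) := by ring
  refine ⟨hmain, fun fi hfi => ?_⟩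
  calc ‖fi xbar - fi xhat‖ ≤ L * ‖xbar - xhat‖ := hfi _ _
    _ ≤ L * ((C₂ * Cx + ((p : ℝ) - 2) * C₄ * Cβ + C₄ * L * Cy) * h ^ (p + 1)) :=
        mul_le_mul_of_nonneg_left hmain hL
    _ = L * (C₂ * Cx + ((p : ℝ) - 2) * C₄ * Cβ + C₄ * L * Cy) * h ^ (p + 1) := by ring
end

section
/- Let V be a real normed vector space, p ≥ 2 an integer, 0 < h ≤ 1, and L, C₆, C₈, C_x, C_y, C_β, K₁ ≥ 0. Let x_{i−1} ∈ V, x̃ᶜ_{i−1} ∈ V with ‖x̃ᶜ_{i−1} − x_{i−1}‖ ≤ C_x·h^(p+1), x̃_{i−1} ∈ V with ‖x̃_{i−1} − x_{i−1}‖ ≤ C_y·h^p, vectors g_1, …, g_{p−1} ∈ V and β̂_2, …, β̂_{p−1} ∈ V with ‖β̂_m − g_m‖ ≤ C_β·h^p for 2 ≤ m ≤ p−1, an L-Lipschitz map f₁ : V → V with f₁(x_{i−1}) = g_1, an L-Lipschitz map f_i : V → V, and points x̄, x̂ ∈ V with ‖x̄ − x̂‖ ≤ K₁·h^(p+1). Let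 C, D_0, D_1, …, D_{p−1} ∈ ℝ be scalars with |C| ≤ C₆ and |D_m| ≤ C₈·h for 0 ≤ m ≤ p−1. Define the corrector outputs x̄ᶜ = C·x̃ᶜ_{i−1} + D_1·f₁(x̃_{i−1}) + Σ_{m=2}^{p−1} D_m·β̂_m + D_0·f_i(x̄) and x̂ᶜ = C·x_{i−1} + Σ_{m=1}^{p−1} D_m·g_m + D_0·f_i(x̂). Then ‖x̄ᶜ − x̂ᶜ‖ ≤ (C₆·C_x + (p−2)·C₈·C_β + C₈·L·C_y + C₈·L·K₁)·h^(p+1). -/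
/-- Discrepancy bound between the corrector step of a predictor–corrector
sampler computed from approximate inputs and from ground-truth inputs. -/
theorem pc_corrector_discrepancy_bound {V : Type*} [NormedAddCommGroup V] [NormedSpace ℝ V]
    (p : ℕ) (hp : 2 ≤ p) (h : ℝ) (hh0 : 0 < h) (hh1 : h ≤ 1)
    (L C₆ C₈ Cx Cy Cβ K₁ : ℝ)
    (hL : 0 ≤ L) (hC₆ : 0 ≤ C₆) (hC₈ : 0 ≤ C₈) (hCx : 0 ≤ Cx) (hCy : 0 ≤ Cy)
    (hCβ : 0 ≤ Cβ) (hK₁ : 0 ≤ K₁)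
    (x1 xc1 xt1 : V)
    (hxc : ‖xc1 - x1‖ ≤ Cx * h ^ (p + 1))
    (hxt : ‖xt1 - x1‖ ≤ Cy * h ^ p)
    (g βhat : ℕ → V)
    (hβ : ∀ m, 2 ≤ m → m ≤ p - 1 → ‖βhat m - g m‖ ≤ Cβ * h ^ p)
    (f₁ : V → V) (hf₁ : ∀ u v : V, ‖f₁ u - f₁ v‖ ≤ L * ‖u - v‖)
    (hf₁x : f₁ x1 = g 1)
    (fi : V → V) (hfi : ∀ u v : V, ‖fi u - fi v‖ ≤ L * ‖u - v‖)
    (xbar xhat : V)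
    (hpred : ‖xbar - xhat‖ ≤ K₁ * h ^ (p + 1))
    (Cs : ℝ) (D : ℕ → ℝ)
    (hCs : |Cs| ≤ C₆)
    (hD : ∀ m, m ≤ p - 1 → |D m| ≤ C₈ * h)
    (xbarc xhatc : V)
    (hxbarc : xbarc = Cs • xc1 + D 1 • f₁ xt1
      + (∑ m ∈ Finset.Icc 2 (p - 1), D m • βhat m) + D 0 • fi xbar)
    (hxhatc : xhatc = Cs • x1
      + (∑ m ∈ Finset.Icc 1 (p - 1), D m • g m) + D 0 • fi xhat) :
    ‖xbarc - xhatc‖ ≤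
      (C₆ * Cx + ((p : ℝ) - 2) * C₈ * Cβ + C₈ * L * Cy + C₈ * L * K₁) * h ^ (p + 1) := by
  have hsplit : Finset.Icc 1 (p - 1) = insert 1 (Finset.Icc 2 (p - 1)) := by
    ext m; simp only [Finset.mem_Icc, Finset.mem_insert]; omega
  have h1notin : (1 : ℕ) ∉ Finset.Icc 2 (p - 1) := by simp
  have hdiff : xbarc - xhatc = Cs • (xc1 - x1) + D 1 • (f₁ xt1 - f₁ x1)
      + (∑ m ∈ Finset.Icc 2 (p - 1), D m • (βhat m - g m))
      + D 0 • (fi xbar - fi xhat) := by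
    rw [hxbarc, hxhatc, hsplit, Finset.sum_insert h1notin, hf₁x]
    simp only [smul_sub, Finset.sum_sub_distrib]
    abel
  have hh0' := hh0.le
  have hpow : (0:ℝ) ≤ h ^ (p + 1) := pow_nonneg hh0' _
  have hpowp : (0:ℝ) ≤ h ^ p := pow_nonneg hh0' _
  have hA : ‖Cs • (xc1 - x1)‖ ≤ C₆ * (Cx * h ^ (p + 1)) := by
    rw [norm_smul, Real.norm_eq_abs]
    exact mul_le_mul hCs hxc (norm_nonneg _) hC₆
  have hD1 : |D 1| ≤ C₈ * h := hD 1 (by omega)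
  have hD0 : |D 0| ≤ C₈ * h := hD 0 (by omega)
  have hB : ‖D 1 • (f₁ xt1 - f₁ x1)‖ ≤ (C₈ * h) * (L * (Cy * h ^ p)) := by
    rw [norm_smul, Real.norm_eq_abs]
    refine mul_le_mul hD1 ((hf₁ _ _).trans ?_) (norm_nonneg _) (by positivity)
    exact mul_le_mul_of_nonneg_left hxt hL
  have hS : ‖∑ m ∈ Finset.Icc 2 (p - 1), D m • (βhat m - g m)‖
      ≤ ((p:ℝ) - 2) * ((C₈ * h) * (Cβ * h ^ p)) := by
    refine (norm_sum_le _ _).trans ?_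
    have : ∀ m ∈ Finset.Icc 2 (p - 1), ‖D m • (βhat m - g m)‖
        ≤ (C₈ * h) * (Cβ * h ^ p) := by
      intro m hm
      simp only [Finset.mem_Icc] at hm
      rw [norm_smul, Real.norm_eq_abs]
      exact mul_le_mul (hD m hm.2) (hβ m hm.1 hm.2) (norm_nonneg _) (by positivity)
    refine (Finset.sum_le_sum this).trans ?_
    rw [Finset.sum_const, nsmul_eq_mul, Nat.card_Icc]
    have hcast : ((p - 1 + 1 - 2 : ℕ) : ℝ) = (p:ℝ) - 2 := by
      have h2 : p - 1 + 1 - 2 = p - 2 := by omega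
      rw [h2, Nat.cast_sub hp]; norm_num
    rw [hcast]
  have hE : ‖D 0 • (fi xbar - fi xhat)‖ ≤ (C₈ * h) * (L * (K₁ * h ^ (p + 1))) := by
    rw [norm_smul, Real.norm_eq_abs]
    refine mul_le_mul hD0 ((hfi _ _).trans ?_) (norm_nonneg _) (by positivity)
    exact mul_le_mul_of_nonneg_left hpred hL
  have htri : ‖xbarc - xhatc‖ ≤ ‖Cs • (xc1 - x1)‖ + ‖D 1 • (f₁ xt1 - f₁ x1)‖
        + ‖∑ m ∈ Finset.Icc 2 (p - 1), D m • (βhat m - g m)‖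
        + ‖D 0 • (fi xbar - fi xhat)‖ := by
    rw [hdiff]
    refine le_trans (norm_add_le _ _) ?_
    refine add_le_add (le_trans (norm_add_le _ _) (add_le_add (norm_add_le _ _) le_rfl)) le_rfl
  have hle : C₈ * L * K₁ * h ^ (p + 2) ≤ C₈ * L * K₁ * h ^ (p + 1) := by
    refine mul_le_mul_of_nonneg_left (pow_le_pow_of_le_one hh0' hh1 (by omega)) (by positivity)
  have hrw : C₆ * (Cx * h ^ (p + 1)) + (C₈ * h) * (L * (Cy * h ^ p))
      + ((p:ℝ) - 2) * ((C₈ * h) * (Cβ * h ^ p)) + (C₈ * h) * (L * (K₁ * h ^ (p + 1)))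
      = C₆ * Cx * h ^ (p + 1) + C₈ * L * Cy * h ^ (p + 1)
      + ((p:ℝ) - 2) * C₈ * Cβ * h ^ (p + 1) + C₈ * L * K₁ * h ^ (p + 2) := by ring
  linarith [hA, hB, hS, hE, htri]
end

section
/- Let V be a real normed vector space, p ≥ 2 an integer, h > 0, L ≥ 0, C₄ ≥ 0, C₈ ≥ 0, C₇ > 0, K₃ ≥ 0. Let f : V → V be L-Lipschitz, let B₁, D₁, D₀ ∈ ℝ be scalars with |B₁| ≤ C₄·h, |D₁| ≥ C₇·h and |D₀| ≤ C₈·h, and let u, a ∈ V. Set b = a + B₁·u. Assume ‖D₁·u + D₀·(f(b) − f(a))‖ ≤ K₃·h^(p+1) and L·C₄·C₈·h ≤ C₇/2. Then ‖u‖ ≤ (2·K₃/C₇)·h^p. -/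
/-- Extraction step in the predictor–corrector analysis: from a small corrector
discrepancy one can bound the error `u` of the newest compensated model output,
provided the step size is small enough that `L·C₄·C₈·h ≤ C₇/2`. -/
theorem pc_extract_compensated_error {V : Type*} [NormedAddCommGroup V] [NormedSpace ℝ V]
    (p : ℕ) (hp : 2 ≤ p) (h : ℝ) (hh0 : 0 < h)
    (L C₄ C₈ C₇ K₃ : ℝ)
    (hL : 0 ≤ L) (hC₄ : 0 ≤ C₄) (hC₈ : 0 ≤ C₈) (hC₇ : 0 < C₇) (hK₃ : 0 ≤ K₃)
    (f : V → V) (hf : ∀ u v : V, ‖f u - f v‖ ≤ L * ‖u - v‖)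
    (B₁ D₁ D₀ : ℝ)
    (hB₁ : |B₁| ≤ C₄ * h)
    (hD₁ : C₇ * h ≤ |D₁|)
    (hD₀ : |D₀| ≤ C₈ * h)
    (u a : V) (b : V) (hb : b = a + B₁ • u)
    (hsmall : ‖D₁ • u + D₀ • (f b - f a)‖ ≤ K₃ * h ^ (p + 1))
    (hstep : L * C₄ * C₈ * h ≤ C₇ / 2) :
    ‖u‖ ≤ (2 * K₃ / C₇) * h ^ p := by
  have hba : ‖b - a‖ = |B₁| * ‖u‖ := by
    rw [hb]; simp [norm_smul]
  have hfb : ‖f b - f a‖ ≤ L * (C₄ * h) * ‖u‖ := by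
    calc ‖f b - f a‖ ≤ L * ‖b - a‖ := hf b a
      _ = L * |B₁| * ‖u‖ := by rw [hba]; ring
      _ ≤ L * (C₄ * h) * ‖u‖ := by
          have := mul_le_mul_of_nonneg_left hB₁ hL
          nlinarith [norm_nonneg u]
  have hkey : |D₁| * ‖u‖ ≤ K₃ * h ^ (p + 1) + |D₀| * ‖f b - f a‖ := by
    calc |D₁| * ‖u‖ = ‖D₁ • u‖ := by rw [norm_smul, Real.norm_eq_abs]
      _ = ‖(D₁ • u + D₀ • (f b - f a)) - D₀ • (f b - f a)‖ := by rw [add_sub_cancel_right]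
      _ ≤ ‖D₁ • u + D₀ • (f b - f a)‖ + ‖D₀ • (f b - f a)‖ := norm_sub_le _ _
      _ ≤ K₃ * h ^ (p + 1) + |D₀| * ‖f b - f a‖ := by
          rw [norm_smul, Real.norm_eq_abs]; linarith
  have h2 : |D₀| * ‖f b - f a‖ ≤ C₈ * h * (L * (C₄ * h) * ‖u‖) := by
    have h0 : 0 ≤ |D₀| := abs_nonneg _
    have h1 : 0 ≤ L * (C₄ * h) * ‖u‖ := by positivity
    nlinarith [norm_nonneg (f b - f a)]
  -- combine: (C₇ h - L C₄ C₈ h²) ‖u‖ ≤ K₃ h^(p+1)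
  have hmain : C₇ * h / 2 * ‖u‖ ≤ K₃ * h ^ (p + 1) := by
    have hD₁u : C₇ * h * ‖u‖ ≤ |D₁| * ‖u‖ :=
      mul_le_mul_of_nonneg_right hD₁ (norm_nonneg u)
    nlinarith [norm_nonneg u, hh0.le, mul_le_mul_of_nonneg_right hstep
      (mul_nonneg hh0.le (norm_nonneg u))]
  have hpow : h ^ (p + 1) = h * h ^ p := by ring
  rw [hpow] at hmain
  rw [div_mul_eq_mul_div, le_div_iff₀ hC₇]
  nlinarith [pow_pos hh0 p, norm_nonneg u]
end

section
/- (Global convergence of the predictor–corrector DC-Solver, Theorem: applying dynamic compensation to a predictor–corrector sampler of (p+1)-th order of convergence maintains the (p+1)-th order of convergence.) Let V be a real normed vector space; fix integers p ≥ 2, K ≥ p−1, M > K and constants L, C₂, C₄, C₆, C₈, C_gt, C_gt′, C_w, C_w′ ≥ 0 and C₃, C₇ > 0. Then there exist constants h₀ > 0 and Γ, Γ′, Γ″ ≥ 0, depending only on these data (and not on h), such that for every h with 0 < h ≤ h₀ the following holds: for every family of L-Lipschitz maps f_k : V → V (0 ≤ k ≤ M), every scalars A_i, B_{i,m}, C_i,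 D_{i,m} (K < i ≤ M, 0 ≤ m ≤ p−1) with |A_i| ≤ C₂, C₃·h ≤ |B_{i,m}| ≤ C₄·h, |C_i| ≤ C₆, C₇·h ≤ |D_{i,m}| ≤ C₈·h, every ground-truth points x_0, …, x_M ∈ V satisfying, for all K < i ≤ M with x̂_i := A_i·x_{i−1} + Σ_{m=1}^{p−1} B_{i,m}·f_{i−m}(x_{i−m}), the bounds ‖x̂_i − x_i‖ ≤ C_gt′·h^(p+1) and ‖C_i·x_{i−1} + Σ_{m=1}^{p−1} D_{i,m}·f_{i−m}(x_{i−m}) + D_{i,0}·f_i(x̂_i) − x_i‖ ≤ C_gt·h^(p+2), and every sequences x̃_k, x̃ᶜ_k ∈ V (0 ≤ k ≤ M) and β̂_k ∈ V (0 ≤ k ≤ M−1) such that (a) ‖x̃ᶜ_k − x_k‖ ≤ C_w·h^(p+1) and ‖x̃_k − x_k‖ ≤ C_w′·h^p for 0 ≤ k ≤ K, (b) β̂_k = f_k(x̃_k) for 0 ≤ k < K, and (c) for each K < i ≤ M, x̃_i = A_i·x̃ᶜ_{i−1} + Σ_{m=1}^{p−1} B_{i,m}·β̂_{i−m}, x̃ᶜ_i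 = C_i·x̃ᶜ_{i−1} + Σ_{m=1}^{p−1} D_{i,m}·β̂_{i−m} + D_{i,0}·f_i(x̃_i), and ‖x̃ᶜ_i − x_i‖ ≤ ‖C_i·x̃ᶜ_{i−1} + D_{i,1}·f_{i−1}(x̃_{i−1}) + Σ_{m=2}^{p−1} D_{i,m}·β̂_{i−m} + D_{i,0}·f_i(x̄_i) − x_i‖ where x̄_i := A_i·x̃ᶜ_{i−1} + B_{i,1}·f_{i−1}(x̃_{i−1}) + Σ_{m=2}^{p−1} B_{i,m}·β̂_{i−m}, one has ‖x̃ᶜ_M − x_M‖ ≤ Γ·h^(p+1), ‖x̃_M − x_M‖ ≤ Γ′·h^p, and ‖β̂_{M−1} − f_{M−1}(x_{M−1})‖ ≤ Γ″·h^p. -/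
/-!
Fix a step `i > K` and suppose every earlier error is `O(η)` with `η ≥ h^p`, the corrected
iterates even `O(h η)`. Feeding the uncompensated output `f_{i-1}(x̃_{i-1})` instead of `β̂_{i-1}`
gives the standard predictor–corrector step, which is stable: its corrected iterate is within
`O(h η)` of `x_i`. By the optimality relation so is `x̃ᶜ_i`. The two corrected iterates differ by
`D_{i,1} δ` plus a term of size `|D_{i,0}| L |B_{i,1}| ‖δ‖ = O(h²) ‖δ‖`, where
`δ = β̂_{i-1} - f_{i-1}(x̃_{i-1})`; as `|D_{i,1}| ≥ C₇ h`, for small `h` this forces `δ = O(η)`.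
So every error at step `i` is at most a fixed constant `Q` times the bound of the earlier steps,
and the errors after `i` steps are `O(Q^i h^p)`.
-/

open Finset

theorem geometric_induction {P : ℕ → ℝ → Prop} {K : ℕ} {η₀ Q : ℝ} (hη₀ : 0 ≤ η₀) (hQ : 1 ≤ Q)
    (mono : ∀ i η η', η ≤ η' → P i η → P i η') (base : ∀ i ≤ K, P i η₀)
    (step : ∀ i, K < i → ∀ η, η₀ ≤ η → (∀ j < i, P j η) → P i (Q * η)) (i : ℕ) :
    P i (Q ^ i * η₀) := by
  induction i using Nat.strong_induction_on with
  | _ i ih =>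
    by_cases hi : i ≤ K
    · exact mono _ _ _ (le_mul_of_one_le_left hη₀ (one_le_pow₀ hQ)) (base i hi)
    obtain ⟨k, rfl⟩ : ∃ k, i = k + 1 := ⟨i - 1, by omega⟩
    rw [pow_succ', mul_assoc]
    refine step _ (by omega) _ (le_mul_of_one_le_left hη₀ (one_le_pow₀ hQ)) fun j hj => ?_
    exact mono _ _ _ (by gcongr; omega) (ih j hj)

namespace DCSolver

open Function

theorem exists_step_size_le {C₄ C₇ C₈ L : ℝ} (hC₄ : 0 ≤ C₄) (hC₈ : 0 ≤ C₈) (hL : 0 ≤ L)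
    (hC₇ : 0 < C₇) :
    ∃ h₀ > 0, ∀ h, 0 ≤ h → h ≤ h₀ → h ≤ 1 ∧ C₄ * C₈ * L * h ≤ C₇ / 2 := by
  refine ⟨min 1 (C₇ / (2 * (C₄ * C₈ * L) + 1)), lt_min one_pos (by positivity),
    fun h hh hh₀ => ⟨hh₀.trans (min_le_left _ _), ?_⟩⟩
  have := (le_div_iff₀ (by positivity)).1 (hh₀.trans (min_le_right _ _))
  linarith [mul_nonneg (mul_nonneg (mul_nonneg hC₄ hC₈) hL) hh]

section

variable {V : Type*} [NormedAddCommGroup V]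

theorem norm_update_one_sub_le {n : ℕ} {g g' : ℕ → V} {u : V} {ε₁ ε : ℝ}
    (hu : ‖u - g' 1‖ ≤ ε₁) (hg : ∀ m ∈ Icc 2 n, ‖g m - g' m‖ ≤ ε) :
    ∀ m ∈ Icc 1 n, ‖update g 1 u m - g' m‖ ≤ max ε₁ ε := by
  intro m hm
  rcases eq_or_ne m 1 with rfl | hm1
  · simpa using le_max_of_le_left hu
  · rw [update_of_ne hm1]
    exact le_max_of_le_right (hg m (by simp at hm ⊢; omega))

variable [NormedSpace ℝ V]

/-- `a • y + ∑_{m=1}^{n} b m • g m`; at sampler step `i`, `g m` is the model output of step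
`i - m`. -/
def multistep (a : ℝ) (b : ℕ → ℝ) (n : ℕ) (y : V) (g : ℕ → V) : V :=
  a • y + ∑ m ∈ Icc 1 n, b m • g m

def pcCorrector (a c : ℝ) (b d : ℕ → ℝ) (n : ℕ) (F : V → V) (y : V) (g : ℕ → V) : V :=
  multistep c d n y g + d 0 • F (multistep a b n y g)

theorem norm_smul_le_of_abs_le {c β ε : ℝ} {v : V} (hc : |c| ≤ β) (hv : ‖v‖ ≤ ε) :
    ‖c • v‖ ≤ β * ε := by
  rw [norm_smul, Real.norm_eq_abs]
  exact mul_le_mul hc hv (norm_nonneg v) ((abs_nonneg c).trans hc)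

theorem norm_multistep_sub_le {a α β ε₀ ε : ℝ} {b : ℕ → ℝ} {n : ℕ} {y y' : V} {g g' : ℕ → V}
    (ha : |a| ≤ α) (hb : ∀ m ∈ Icc 1 n, |b m| ≤ β) (hy : ‖y - y'‖ ≤ ε₀)
    (hg : ∀ m ∈ Icc 1 n, ‖g m - g' m‖ ≤ ε) :
    ‖multistep a b n y g - multistep a b n y' g'‖ ≤ α * ε₀ + n * (β * ε) := by
  have hsum : ‖∑ m ∈ Icc 1 n, b m • (g m - g' m)‖ ≤ n * (β * ε) :=
    calc _ ≤ ∑ _m ∈ Icc 1 n, β * ε :=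
          norm_sum_le_of_le _ fun m hm => norm_smul_le_of_abs_le (hb m hm) (hg m hm)
      _ = n * (β * ε) := by simp
  calc ‖multistep a b n y g - multistep a b n y' g'‖
      = ‖a • (y - y') + ∑ m ∈ Icc 1 n, b m • (g m - g' m)‖ := by
        simp only [multistep, smul_sub, sum_sub_distrib]
        abel_nf
    _ ≤ α * ε₀ + n * (β * ε) :=
        (norm_add_le _ _).trans (add_le_add (norm_smul_le_of_abs_le ha hy) hsum)

theorem multistep_sub_multistep_update_one {a : ℝ} {b : ℕ → ℝ} {n : ℕ} (hn : 1 ≤ n) (y : V)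
    (g : ℕ → V) (u : V) :
    multistep a b n y g - multistep a b n y (update g 1 u) = b 1 • (g 1 - u) := by
  rw [multistep, multistep, add_sub_add_left_eq_sub, ← sum_sub_distrib, sum_eq_single 1]
  · simp [smul_sub]
  · intro m _ hm
    simp [update_of_ne hm]
  · simp [hn]

theorem multistep_update_one {a : ℝ} {b : ℕ → ℝ} {n : ℕ} (hn : 1 ≤ n) (y : V) (g : ℕ → V)
    (u : V) :
    multistep a b n y (update g 1 u) = a • y + b 1 • u + ∑ m ∈ Icc 2 n, b m • g m := by
  rw [multistep, ← insert_Icc_add_one_left_eq_Icc hn, sum_insert (by simp), update_self,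
    add_assoc]
  congr 2
  exact sum_congr rfl fun m hm => by
    rw [update_of_ne (by simp at hm; omega)]

theorem norm_pcCorrector_sub_le {a c C₂ C₄ C₆ C₈ L h ε : ℝ} {b d : ℕ → ℝ} {n : ℕ}
    {F : V → V} {y y' : V} {g g' : ℕ → V} (hF : ∀ u v, ‖F u - F v‖ ≤ L * ‖u - v‖)
    (hL : 0 ≤ L) (hC₂ : 0 ≤ C₂) (hC₄ : 0 ≤ C₄) (hC₈ : 0 ≤ C₈) (hh1 : h ≤ 1)
    (ha : |a| ≤ C₂) (hb : ∀ m ∈ Icc 1 n, |b m| ≤ C₄ * h) (hc : |c| ≤ C₆)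
    (hd : ∀ m ≤ n, |d m| ≤ C₈ * h) (hy : ‖y - y'‖ ≤ h * ε)
    (hg : ∀ m ∈ Icc 1 n, ‖g m - g' m‖ ≤ ε) :
    ‖pcCorrector a c b d n F y g - pcCorrector a c b d n F y' g'‖
      ≤ (C₆ + n * C₈ + C₈ * L * (C₂ + n * C₄)) * (h * ε) := by
  have hhε : 0 ≤ h * ε := (norm_nonneg _).trans hy
  have hpred : ‖multistep a b n y g - multistep a b n y' g'‖ ≤ (C₂ + n * C₄) * (h * ε) :=
    (norm_multistep_sub_le ha hb hy hg).trans_eq (by ring)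
  have hcorr : ‖multistep c d n y g - multistep c d n y' g'‖ ≤ (C₆ + n * C₈) * (h * ε) :=
    (norm_multistep_sub_le hc (fun m hm => hd m (mem_Icc.1 hm).2) hy hg).trans_eq (by ring)
  have hmodel : ‖d 0 • (F (multistep a b n y g) - F (multistep a b n y' g'))‖
      ≤ C₈ * L * (C₂ + n * C₄) * (h * ε) :=
    calc _ ≤ C₈ * h * (L * ((C₂ + n * C₄) * (h * ε))) :=
          norm_smul_le_of_abs_le (hd 0 n.zero_le) ((hF _ _).trans (by gcongr))
      _ = h * (C₈ * L * (C₂ + n * C₄) * (h * ε)) := by ring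
      _ ≤ C₈ * L * (C₂ + n * C₄) * (h * ε) := mul_le_of_le_one_left (by positivity) hh1
  calc _ = ‖(multistep c d n y g - multistep c d n y' g')
          + d 0 • (F (multistep a b n y g) - F (multistep a b n y' g'))‖ := by
        rw [pcCorrector, pcCorrector, smul_sub]
        abel_nf
    _ ≤ _ := (norm_add_le _ _).trans ((add_le_add hcorr hmodel).trans_eq (by ring))

theorem mul_norm_le_of_closer {F : V → V} {L a b c : ℝ} {x z w u v δ : V}
    (hF : ∀ u v, ‖F u - F v‖ ≤ L * ‖u - v‖) (hw : w - z = a • δ + c • (F u - F v))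
    (huv : u - v = b • δ) (hcloser : ‖w - x‖ ≤ ‖z - x‖) :
    (|a| - |c| * L * |b|) * ‖δ‖ ≤ 2 * ‖z - x‖ := by
  have hmodel : ‖c • (F u - F v)‖ ≤ |c| * L * |b| * ‖δ‖ := by
    rw [norm_smul, Real.norm_eq_abs]
    calc |c| * ‖F u - F v‖ ≤ |c| * (L * ‖u - v‖) := by gcongr; exact hF u v
      _ = |c| * L * |b| * ‖δ‖ := by rw [huv, norm_smul, Real.norm_eq_abs]; ring
  have hδ : ‖a • δ‖ ≤ ‖w - x‖ + ‖z - x‖ + ‖c • (F u - F v)‖ :=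
    calc ‖a • δ‖ = ‖(w - x) - (z - x) - c • (F u - F v)‖ := by
          rw [sub_sub_sub_cancel_right, hw, add_sub_cancel_right]
      _ ≤ _ := (norm_sub_le _ _).trans (add_le_add_left (norm_sub_le _ _) _)
  rw [norm_smul, Real.norm_eq_abs] at hδ
  linarith

theorem norm_sub_le_of_optimal {a c C₄ C₇ C₈ L h η K : ℝ} {b d : ℕ → ℝ} {n : ℕ}
    {F : V → V} {x y u : V} {g : ℕ → V} (hn : 1 ≤ n) (hF : ∀ u v, ‖F u - F v‖ ≤ L * ‖u - v‖)
    (hL : 0 ≤ L) (hC₇ : 0 < C₇) (hh : 0 < h) (hsmall : C₄ * C₈ * L * h ≤ C₇ / 2)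
    (hb₁ : |b 1| ≤ C₄ * h) (hd₀ : |d 0| ≤ C₈ * h) (hd₁ : C₇ * h ≤ |d 1|)
    (hopt : ‖pcCorrector a c b d n F y g - x‖
      ≤ ‖pcCorrector a c b d n F y (update g 1 u) - x‖)
    (hstd : ‖pcCorrector a c b d n F y (update g 1 u) - x‖ ≤ K * (h * η)) :
    ‖g 1 - u‖ ≤ 4 * K / C₇ * η := by
  have hcoef : C₇ * h / 2 ≤ |d 1| - |d 0| * L * |b 1| := by
    have h₁ : |d 0| * L ≤ C₈ * h * L := mul_le_mul_of_nonneg_right hd₀ hL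
    have h₂ := mul_le_mul h₁ hb₁ (abs_nonneg _) ((mul_nonneg (abs_nonneg _) hL).trans h₁)
    linarith [mul_le_mul_of_nonneg_right hsmall hh.le]
  have hclose := mul_norm_le_of_closer hF
    (by rw [pcCorrector, pcCorrector, ← multistep_sub_multistep_update_one hn, smul_sub]; abel)
    (multistep_sub_multistep_update_one hn y g u) hopt
  rw [div_mul_eq_mul_div, le_div_iff₀ hC₇]
  refine le_of_mul_le_mul_left ?_ hh
  linarith [mul_le_mul_of_nonneg_right hcoef (norm_nonneg (g 1 - u))]

theorem norm_pcCorrector_update_sub_le {a c C₂ C₄ C₆ C₈ Cgt L h η : ℝ} {b d : ℕ → ℝ}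
    {n : ℕ} {F : V → V} {x₀ x₁ y u : V} {g g' : ℕ → V}
    (hF : ∀ u v, ‖F u - F v‖ ≤ L * ‖u - v‖) (hL : 0 ≤ L) (hC₂ : 0 ≤ C₂) (hC₄ : 0 ≤ C₄)
    (hC₈ : 0 ≤ C₈) (hh : 0 ≤ h) (hh1 : h ≤ 1) (hη : 0 ≤ η)
    (ha : |a| ≤ C₂) (hb : ∀ m ∈ Icc 1 n, |b m| ≤ C₄ * h) (hc : |c| ≤ C₆)
    (hd : ∀ m ≤ n, |d m| ≤ C₈ * h)
    (hcorr : ‖pcCorrector a c b d n F x₀ g' - x₁‖ ≤ Cgt * (h * η))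
    (hy : ‖y - x₀‖ ≤ h * η) (hu : ‖u - g' 1‖ ≤ L * η) (hg : ∀ m ∈ Icc 2 n, ‖g m - g' m‖ ≤ η) :
    ‖pcCorrector a c b d n F y (update g 1 u) - x₁‖
      ≤ ((C₆ + n * C₈ + C₈ * L * (C₂ + n * C₄)) * max L 1 + Cgt) * (h * η) := by
  have hhist : ∀ m ∈ Icc 1 n, ‖update g 1 u m - g' m‖ ≤ max L 1 * η := by
    rw [max_mul_of_nonneg _ _ hη, one_mul]
    exact norm_update_one_sub_le hu hg
  have hy' : ‖y - x₀‖ ≤ h * (max L 1 * η) :=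
    hy.trans (mul_le_mul_of_nonneg_left (le_mul_of_one_le_left hη (le_max_right _ _)) hh)
  calc _ ≤ ‖pcCorrector a c b d n F y (update g 1 u) - pcCorrector a c b d n F x₀ g'‖
        + ‖pcCorrector a c b d n F x₀ g' - x₁‖ := norm_sub_le_norm_sub_add_norm_sub _ _ _
    _ ≤ _ := (add_le_add (norm_pcCorrector_sub_le hF hL hC₂ hC₄ hC₈ hh1 ha hb hc hd hy' hhist)
        hcorr).trans_eq (by ring)

/-- `K₁` bounds the error of the standard corrector step, `Kβ` the compensated output, and the
last term the next predicted iterate. -/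
noncomputable def stepConst (n : ℕ) (L C₂ C₄ C₆ C₇ C₈ Cgt Cgt' : ℝ) : ℝ :=
  let K₁ := (C₆ + n * C₈ + C₈ * L * (C₂ + n * C₄)) * max L 1 + Cgt
  let Kβ := 4 * K₁ / C₇ + L
  max 1 (max K₁ (max Kβ (C₂ + n * C₄ * max Kβ 1 + Cgt')))

theorem one_le_stepConst (n : ℕ) (L C₂ C₄ C₆ C₇ C₈ Cgt Cgt' : ℝ) :
    1 ≤ stepConst n L C₂ C₄ C₆ C₇ C₈ Cgt Cgt' :=
  le_max_left _ _

/-- `g` are the compensated outputs, `g'` the ground-truth outputs (both indexed by the lag) and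
`u` the uncompensated output of the previous step. -/
theorem dc_step {p n : ℕ} {a c C₂ C₄ C₆ C₇ C₈ Cgt Cgt' L h η : ℝ} {b d : ℕ → ℝ} {F : V → V}
    {x₀ x₁ xhat y u xt xtc : V} {g g' : ℕ → V} (hn : 1 ≤ n)
    (hF : ∀ u v, ‖F u - F v‖ ≤ L * ‖u - v‖) (hL : 0 ≤ L) (hC₂ : 0 ≤ C₂) (hC₄ : 0 ≤ C₄)
    (hC₇ : 0 < C₇) (hC₈ : 0 ≤ C₈) (hCgt : 0 ≤ Cgt) (hCgt' : 0 ≤ Cgt')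
    (hh : 0 < h) (hh1 : h ≤ 1) (hsmall : C₄ * C₈ * L * h ≤ C₇ / 2) (hη : h ^ p ≤ η)
    (ha : |a| ≤ C₂) (hb : ∀ m, 1 ≤ m → m ≤ n → |b m| ≤ C₄ * h) (hc : |c| ≤ C₆)
    (hd : ∀ m ≤ n, C₇ * h ≤ |d m| ∧ |d m| ≤ C₈ * h)
    (hxhat : xhat = multistep a b n x₀ g') (hpred : ‖xhat - x₁‖ ≤ Cgt' * h ^ (p + 1))
    (hcorr : ‖multistep c d n x₀ g' + d 0 • F xhat - x₁‖ ≤ Cgt * h ^ (p + 2))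
    (hy : ‖y - x₀‖ ≤ h * η) (hu : ‖u - g' 1‖ ≤ L * η) (hg : ∀ m ∈ Icc 2 n, ‖g m - g' m‖ ≤ η)
    (hxt : xt = multistep a b n y g) (hxtc : xtc = multistep c d n y g + d 0 • F xt)
    (hopt : ‖xtc - x₁‖ ≤ ‖c • y + d 1 • u + (∑ m ∈ Icc 2 n, d m • g m)
      + d 0 • F (a • y + b 1 • u + ∑ m ∈ Icc 2 n, b m • g m) - x₁‖) :
    let Q := stepConst n L C₂ C₄ C₆ C₇ C₈ Cgt Cgt'
    ‖xtc - x₁‖ ≤ h * (Q * η) ∧ ‖xt - x₁‖ ≤ Q * η ∧ ‖g 1 - g' 1‖ ≤ Q * η := by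
  intro Q
  set K₁ := (C₆ + n * C₈ + C₈ * L * (C₂ + n * C₄)) * max L 1 + Cgt
  set Kβ := 4 * K₁ / C₇ + L
  have hη₀ : 0 ≤ η := (pow_nonneg hh.le p).trans hη
  have hhη : h ^ (p + 1) ≤ h * η := by rw [pow_succ']; gcongr
  have hb' : ∀ m ∈ Icc 1 n, |b m| ≤ C₄ * h := fun m hm => hb m (mem_Icc.1 hm).1 (mem_Icc.1 hm).2
  have hxtc' : xtc = pcCorrector a c b d n F y g := by rw [hxtc, hxt, pcCorrector]
  have hcorr' : ‖pcCorrector a c b d n F x₀ g' - x₁‖ ≤ Cgt * (h * η) := by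
    rw [pcCorrector, ← hxhat]
    refine hcorr.trans (mul_le_mul_of_nonneg_left ?_ hCgt)
    calc h ^ (p + 2) ≤ h ^ (p + 1) := pow_le_pow_of_le_one hh.le hh1 (by omega)
      _ ≤ h * η := hhη
  have hstd := norm_pcCorrector_update_sub_le hF hL hC₂ hC₄ hC₈ hh.le hh1 hη₀ ha hb' hc
    (fun m hm => (hd m hm).2) hcorr' hy hu hg
  have hopt' : ‖pcCorrector a c b d n F y g - x₁‖
      ≤ ‖pcCorrector a c b d n F y (update g 1 u) - x₁‖ := by
    rwa [← hxtc', pcCorrector, multistep_update_one hn, multistep_update_one hn]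
  have hβ : ‖g 1 - g' 1‖ ≤ Kβ * η :=
    calc ‖g 1 - g' 1‖ ≤ ‖g 1 - u‖ + ‖u - g' 1‖ := norm_sub_le_norm_sub_add_norm_sub _ _ _
      _ ≤ 4 * K₁ / C₇ * η + L * η := add_le_add (norm_sub_le_of_optimal hn hF hL hC₇ hh hsmall
          (hb 1 le_rfl hn) (hd 0 n.zero_le).2 (hd 1 hn).1 hopt' hstd) hu
      _ = Kβ * η := by ring
  have hxt' : ‖xt - x₁‖ ≤ (C₂ + n * C₄ * max Kβ 1 + Cgt') * (h * η) := by
    have hhist : ∀ m ∈ Icc 1 n, ‖g m - g' m‖ ≤ max Kβ 1 * η := by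
      rw [max_mul_of_nonneg _ _ hη₀, one_mul]
      simpa only [update_eq_self] using norm_update_one_sub_le (u := g 1) hβ hg
    calc ‖xt - x₁‖ ≤ ‖xt - xhat‖ + ‖xhat - x₁‖ := norm_sub_le_norm_sub_add_norm_sub _ _ _
      _ ≤ (C₂ * (h * η) + n * (C₄ * h * (max Kβ 1 * η))) + Cgt' * (h * η) :=
        add_le_add (by rw [hxt, hxhat]; exact norm_multistep_sub_le ha hb' hy hhist)
          (hpred.trans (mul_le_mul_of_nonneg_left hhη hCgt'))
      _ = _ := by ring
  have hK₁ : K₁ ≤ Q := le_max_of_le_right (le_max_left _ _)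
  have hKβ : Kβ ≤ Q := le_max_of_le_right (le_max_of_le_right (le_max_left _ _))
  have hK₂ : C₂ + n * C₄ * max Kβ 1 + Cgt' ≤ Q :=
    le_max_of_le_right (le_max_of_le_right (le_max_right _ _))
  refine ⟨?_, ?_, hβ.trans (by gcongr)⟩
  · rw [hxtc']
    calc _ ≤ K₁ * (h * η) := hopt'.trans hstd
      _ ≤ Q * (h * η) := by gcongr
      _ = h * (Q * η) := by ring
  · calc _ ≤ Q * (h * η) := hxt'.trans (by gcongr)
      _ ≤ Q * η := mul_le_mul_of_nonneg_left (mul_le_of_le_one_left hη₀ hh1)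
          (zero_le_one.trans (one_le_stepConst ..))

end

theorem warmup_errors_le {V : Type*} [NormedAddCommGroup V] {f : ℕ → V → V}
    {x xt xtc βhat : ℕ → V} {p K M i : ℕ} {L Cw Cw' T h : ℝ} (hK : 1 ≤ K)
    (hf : ∀ k ≤ M, ∀ u v, ‖f k u - f k v‖ ≤ L * ‖u - v‖)
    (hL : 0 ≤ L) (hh : 0 ≤ h) (hT : max Cw (max Cw' (L * Cw')) ≤ T)
    (hwc : ∀ k ≤ K, ‖xtc k - x k‖ ≤ Cw * h ^ (p + 1))
    (hwp : ∀ k ≤ K, ‖xt k - x k‖ ≤ Cw' * h ^ p) (hwb : ∀ k < K, βhat k = f k (xt k))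
    (hiK : i ≤ K) (hiM : i ≤ M) :
    ‖xtc i - x i‖ ≤ h * (T * h ^ p) ∧ ‖xt i - x i‖ ≤ T * h ^ p ∧
      ‖βhat (i - 1) - f (i - 1) (x (i - 1))‖ ≤ T * h ^ p := by
  obtain ⟨hCwT, hCw'T, hLCw'T⟩ : Cw ≤ T ∧ Cw' ≤ T ∧ L * Cw' ≤ T := by
    simpa only [max_le_iff] using hT
  refine ⟨(hwc i hiK).trans ?_, (hwp i hiK).trans (by gcongr), ?_⟩
  · calc Cw * h ^ (p + 1) = h * (Cw * h ^ p) := by ring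
      _ ≤ h * (T * h ^ p) := by gcongr
  · rw [hwb (i - 1) (by omega)]
    calc _ ≤ L * (Cw' * h ^ p) := (hf _ (by omega) _ _).trans (by gcongr; exact hwp _ (by omega))
      _ = L * Cw' * h ^ p := by ring
      _ ≤ T * h ^ p := by gcongr

end DCSolver

open DCSolver

theorem dc_pc_global_convergence_general {V : Type*} [NormedAddCommGroup V] [NormedSpace ℝ V]
    (p K M : ℕ) (hp : 2 ≤ p) (hK : p - 1 ≤ K)
    (L C₂ C₄ C₆ C₈ Cgt Cgt' Cw Cw' C₃ C₇ : ℝ)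
    (hL : 0 ≤ L) (hC₂ : 0 ≤ C₂) (hC₄ : 0 ≤ C₄) (hC₈ : 0 ≤ C₈)
    (hCgt : 0 ≤ Cgt) (hCgt' : 0 ≤ Cgt')
    (hC₇ : 0 < C₇) :
    ∃ (h₀ : ℝ) (Γ Γ' Γ'' : ℝ), 0 < h₀ ∧ 0 ≤ Γ ∧ 0 ≤ Γ' ∧ 0 ≤ Γ'' ∧
      ∀ (h : ℝ), 0 < h → h ≤ h₀ →
      ∀ (f : ℕ → V → V),
        (∀ k, k ≤ M → ∀ u v : V, ‖f k u - f k v‖ ≤ L * ‖u - v‖) →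
      ∀ (A C : ℕ → ℝ) (B D : ℕ → ℕ → ℝ),
        (∀ i, K < i → i ≤ M → |A i| ≤ C₂) →
        (∀ i, K < i → i ≤ M → ∀ m, 1 ≤ m → m ≤ p - 1 →
          C₃ * h ≤ |B i m| ∧ |B i m| ≤ C₄ * h) →
        (∀ i, K < i → i ≤ M → |C i| ≤ C₆) →
        (∀ i, K < i → i ≤ M → ∀ m, m ≤ p - 1 →
          C₇ * h ≤ |D i m| ∧ |D i m| ≤ C₈ * h) →
      ∀ (x : ℕ → V) (xhat : ℕ → V),
        (∀ i, K < i → i ≤ M →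
          xhat i = A i • x (i - 1) + ∑ m ∈ Finset.Icc 1 (p - 1), B i m • f (i - m) (x (i - m))) →
        (∀ i, K < i → i ≤ M → ‖xhat i - x i‖ ≤ Cgt' * h ^ (p + 1)) →
        (∀ i, K < i → i ≤ M →
          ‖C i • x (i - 1) + (∑ m ∈ Finset.Icc 1 (p - 1), D i m • f (i - m) (x (i - m)))
            + D i 0 • f i (xhat i) - x i‖ ≤ Cgt * h ^ (p + 2)) →
      ∀ (xt xtc βhat : ℕ → V),
        -- (a) warm-up accuracy
        (∀ k, k ≤ K → ‖xtc k - x k‖ ≤ Cw * h ^ (p + 1)) →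
        (∀ k, k ≤ K → ‖xt k - x k‖ ≤ Cw' * h ^ p) →
        -- (b) warm-up outputs without compensation
        (∀ k, k < K → βhat k = f k (xt k)) →
        -- (c) DC-Solver updates with the optimality relation
        (∀ i, K < i → i ≤ M →
          xt i = A i • xtc (i - 1) + ∑ m ∈ Finset.Icc 1 (p - 1), B i m • βhat (i - m)) →
        (∀ i, K < i → i ≤ M →
          xtc i = C i • xtc (i - 1) + (∑ m ∈ Finset.Icc 1 (p - 1), D i m • βhat (i - m))
            + D i 0 • f i (xt i)) →
        (∀ i, K < i → i ≤ M →
          ‖xtc i - x i‖ ≤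
            ‖C i • xtc (i - 1) + D i 1 • f (i - 1) (xt (i - 1))
              + (∑ m ∈ Finset.Icc 2 (p - 1), D i m • βhat (i - m))
              + D i 0 • f i (A i • xtc (i - 1) + B i 1 • f (i - 1) (xt (i - 1))
                + ∑ m ∈ Finset.Icc 2 (p - 1), B i m • βhat (i - m)) - x i‖) →
      ‖xtc M - x M‖ ≤ Γ * h ^ (p + 1) ∧
      ‖xt M - x M‖ ≤ Γ' * h ^ p ∧
      ‖βhat (M - 1) - f (M - 1) (x (M - 1))‖ ≤ Γ'' * h ^ p := by
  obtain ⟨h₀, h₀_pos, hsize⟩ := exists_step_size_le hC₄ hC₈ hL hC₇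
  set Q := stepConst (p - 1) L C₂ C₄ C₆ C₇ C₈ Cgt Cgt'
  set T := max 1 (max Cw (max Cw' (L * Cw')))
  have hQ : 1 ≤ Q := one_le_stepConst ..
  have hT : 1 ≤ T := le_max_left _ _
  refine ⟨h₀, T * Q ^ M, T * Q ^ M, T * Q ^ M, h₀_pos, by positivity, by positivity,
    by positivity, ?_⟩
  intro h hh hh₀ f hf A C B D hA hB hC hD x xhat hxhat hpred hcorr xt xtc βhat hwc hwp hwb
    hxt hxtc hopt
  obtain ⟨hh1, hsmall⟩ := hsize h hh.le hh₀
  obtain ⟨h1, h2, h3⟩ := geometric_induction (K := K) (η₀ := T * h ^ p) (by positivity) hQ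
    (P := fun i η => i ≤ M → ‖xtc i - x i‖ ≤ h * η ∧ ‖xt i - x i‖ ≤ η ∧
      ‖βhat (i - 1) - f (i - 1) (x (i - 1))‖ ≤ η)
    (fun i η η' hle hP hi => by
      obtain ⟨h1, h2, h3⟩ := hP hi
      exact ⟨h1.trans (by gcongr), h2.trans hle, h3.trans hle⟩)
    (fun i hiK hiM => warmup_errors_le (by omega) hf hL hh.le (le_max_right _ _) hwc hwp hwb
      hiK hiM)
    (fun i hKi η hη ih hiM => by
      obtain ⟨hxtc', hxt', -⟩ := ih (i - 1) (by omega) (by omega)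
      exact dc_step (p := p) (g' := fun m => f (i - m) (x (i - m))) (g := fun m => βhat (i - m))
        (by omega) (hf i hiM) hL hC₂ hC₄ hC₇ hC₈ hCgt hCgt' hh hh1 hsmall
        ((le_mul_of_one_le_left (by positivity) hT).trans hη) (hA i hKi hiM)
        (fun m h1 h2 => (hB i hKi hiM m h1 h2).2) (hC i hKi hiM) (hD i hKi hiM)
        (hxhat i hKi hiM) (hpred i hKi hiM) (hcorr i hKi hiM) hxtc'
        ((hf _ (by omega) _ _).trans (by gcongr)) (fun m hm => by
          obtain ⟨hm₂, hmp⟩ := mem_Icc.1 hm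
          -- `β̂_{i-m}` is controlled by the invariant at step `i - m + 1`
          have := (ih (i - m + 1) (by omega) (by omega)).2.2
          rwa [show i - m + 1 - 1 = i - m by omega] at this)
        (hxt i hKi hiM) (hxtc i hKi hiM) (hopt i hKi hiM))
    M le_rfl
  exact ⟨h1.trans_eq (by ring), h2.trans_eq (by ring), h3.trans_eq (by ring)⟩

/-- Global convergence of the predictor–corrector DC-Solver: applying dynamic
compensation to a predictor–corrector sampler of `(p+1)`-th order of
convergence maintains the `(p+1)`-th order of convergence. -/
theorem dc_pc_global_convergence {V : Type*} [NormedAddCommGroup V] [NormedSpace ℝ V]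
    (p K M : ℕ) (hp : 2 ≤ p) (hK : p - 1 ≤ K) (hM : K < M)
    (L C₂ C₄ C₆ C₈ Cgt Cgt' Cw Cw' C₃ C₇ : ℝ)
    (hL : 0 ≤ L) (hC₂ : 0 ≤ C₂) (hC₄ : 0 ≤ C₄) (hC₆ : 0 ≤ C₆) (hC₈ : 0 ≤ C₈)
    (hCgt : 0 ≤ Cgt) (hCgt' : 0 ≤ Cgt') (hCw : 0 ≤ Cw) (hCw' : 0 ≤ Cw')
    (hC₃ : 0 < C₃) (hC₇ : 0 < C₇) :
    ∃ (h₀ : ℝ) (Γ Γ' Γ'' : ℝ), 0 < h₀ ∧ 0 ≤ Γ ∧ 0 ≤ Γ' ∧ 0 ≤ Γ'' ∧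
      ∀ (h : ℝ), 0 < h → h ≤ h₀ →
      ∀ (f : ℕ → V → V),
        (∀ k, k ≤ M → ∀ u v : V, ‖f k u - f k v‖ ≤ L * ‖u - v‖) →
      ∀ (A C : ℕ → ℝ) (B D : ℕ → ℕ → ℝ),
        (∀ i, K < i → i ≤ M → |A i| ≤ C₂) →
        (∀ i, K < i → i ≤ M → ∀ m, 1 ≤ m → m ≤ p - 1 →
          C₃ * h ≤ |B i m| ∧ |B i m| ≤ C₄ * h) →
        (∀ i, K < i → i ≤ M → |C i| ≤ C₆) →
        (∀ i, K < i → i ≤ M → ∀ m, m ≤ p - 1 →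
          C₇ * h ≤ |D i m| ∧ |D i m| ≤ C₈ * h) →
      ∀ (x : ℕ → V) (xhat : ℕ → V),
        (∀ i, K < i → i ≤ M →
          xhat i = A i • x (i - 1) + ∑ m ∈ Finset.Icc 1 (p - 1), B i m • f (i - m) (x (i - m))) →
        (∀ i, K < i → i ≤ M → ‖xhat i - x i‖ ≤ Cgt' * h ^ (p + 1)) →
        (∀ i, K < i → i ≤ M →
          ‖C i • x (i - 1) + (∑ m ∈ Finset.Icc 1 (p - 1), D i m • f (i - m) (x (i - m)))
            + D i 0 • f i (xhat i) - x i‖ ≤ Cgt * h ^ (p + 2)) →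
      ∀ (xt xtc βhat : ℕ → V),
        -- (a) warm-up accuracy
        (∀ k, k ≤ K → ‖xtc k - x k‖ ≤ Cw * h ^ (p + 1)) →
        (∀ k, k ≤ K → ‖xt k - x k‖ ≤ Cw' * h ^ p) →
        -- (b) warm-up outputs without compensation
        (∀ k, k < K → βhat k = f k (xt k)) →
        -- (c) DC-Solver updates with the optimality relation
        (∀ i, K < i → i ≤ M →
          xt i = A i • xtc (i - 1) + ∑ m ∈ Finset.Icc 1 (p - 1), B i m • βhat (i - m)) →
        (∀ i, K < i → i ≤ M →
          xtc i = C i • xtc (i - 1) + (∑ m ∈ Finset.Icc 1 (p - 1), D i m • βhat (i - m))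
            + D i 0 • f i (xt i)) →
        (∀ i, K < i → i ≤ M →
          ‖xtc i - x i‖ ≤
            ‖C i • xtc (i - 1) + D i 1 • f (i - 1) (xt (i - 1))
              + (∑ m ∈ Finset.Icc 2 (p - 1), D i m • βhat (i - m))
              + D i 0 • f i (A i • xtc (i - 1) + B i 1 • f (i - 1) (xt (i - 1))
                + ∑ m ∈ Finset.Icc 2 (p - 1), B i m • βhat (i - m)) - x i‖) →
      ‖xtc M - x M‖ ≤ Γ * h ^ (p + 1) ∧
      ‖xt M - x M‖ ≤ Γ' * h ^ p ∧
      ‖βhat (M - 1) - f (M - 1) (x (M - 1))‖ ≤ Γ'' * h ^ p :=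
  dc_pc_global_convergence_general p K M hp hK L C₂ C₄ C₆ C₈ Cgt Cgt' Cw Cw' C₃ C₇ hL hC₂ hC₄ hC₈
    hCgt hCgt' hC₇
end
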